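/- arXiv:2012.05198 — 8 statements merged into one kernel-verified Lean document; each statement's English description precedes it below -/
import Mathlib

section
/- Let (x,y,z) ∈ [0,1]^3 with x = min(x,y,z) and y ≥ 1/2, z ≥ 1/2. Then the conjunction of min(x + yz, y + zx, z + xy) ≤ 1 and min((1-x) + (1-y)(1-z), (1-y) + (1-z)(1-x), (1-z) + (1-x)(1-y)) ≤ 1 is equivalent to the single inequality x + yz ≤ 1. -/
theorem trybula_simplified_min_half (x y z : ℝ)
    (hx : x ∈ Set.Icc (0:ℝ) 1) (hy : y ∈ Set.Icc (0:ℝ) 1) (hz : z ∈ Set.Icc (0:ℝ) 1)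
    (hxy : x ≤ y) (hxz : x ≤ z) (hy2 : (1:ℝ)/2 ≤ y) (hz2 : (1:ℝ)/2 ≤ z) :
    (min (x + y * z) (min (y + z * x) (z + x * y)) ≤ 1 ∧
      min ((1 - x) + (1 - y) * (1 - z))
        (min ((1 - y) + (1 - z) * (1 - x)) ((1 - z) + (1 - x) * (1 - y))) ≤ 1)
    ↔ x + y * z ≤ 1 := by
  obtain ⟨hx0, hx1⟩ := hx
  obtain ⟨hy0, hy1⟩ := hy
  obtain ⟨hz0, hz1⟩ := hz
  have h1 : x + y * z ≤ y + z * x := by nlinarith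
  have h2 : x + y * z ≤ z + x * y := by nlinarith
  have h3 : (1 - y) + (1 - z) * (1 - x) ≤ 1 := by nlinarith
  constructor
  · rintro ⟨ha, -⟩
    calc x + y * z ≤ min (x + y * z) (min (y + z * x) (z + x * y)) := by
          simp [le_min_iff, h1, h2]
      _ ≤ 1 := ha
  · intro h
    refine ⟨min_le_of_left_le h, le_trans (le_trans (min_le_right _ _) (min_le_left _ _)) h3⟩
end

section
/- The volume of the region C_3^{(II)} = {(x,y,z) ∈ [0,1]^3 : 0 ≤ x < 1/2, 1/2 < y ≤ 1, 1/2 < z ≤ 1, x + yz ≤ 1} equals 3/16 − (ln 2)/8. -/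
open MeasureTheory

private lemma sec_vol (c : ℝ) (hc : 0 ≤ c) :
    volume {x : ℝ | 0 ≤ x ∧ x < 1/2 ∧ x ≤ c} = ENNReal.ofReal (min (1/2) c) := by
  rcases le_or_gt (1/2 : ℝ) c with h | h
  · have : {x : ℝ | 0 ≤ x ∧ x < 1/2 ∧ x ≤ c} = Set.Ico 0 (1/2) := by
      ext x; simp only [Set.mem_setOf_eq, Set.mem_Ico]
      exact ⟨fun ⟨h1, h2, _⟩ => ⟨h1, h2⟩, fun ⟨h1, h2⟩ => ⟨h1, h2, h2.le.trans h⟩⟩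
    rw [this, Real.volume_Ico, min_eq_left h]; norm_num
  · have : {x : ℝ | 0 ≤ x ∧ x < 1/2 ∧ x ≤ c} = Set.Icc 0 c := by
      ext x; simp only [Set.mem_setOf_eq, Set.mem_Icc]
      exact ⟨fun ⟨h1, _, h3⟩ => ⟨h1, h3⟩, fun ⟨h1, h3⟩ => ⟨h1, lt_of_le_of_lt h3 h, h3⟩⟩
    rw [this, Real.volume_Icc, min_eq_right h.le]; norm_num

private lemma inner_int (y : ℝ) (hy : y ∈ Set.Ioc (1/2:ℝ) 1) :
    ∫ z in (1/2:ℝ)..1, min (1/2) (1 - y*z) = 3/4 - y/2 - 1/(8*y) := by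
  obtain ⟨hy1, hy2⟩ := hy
  have hy0 : 0 < y := by linarith
  set c : ℝ := 1/(2*y) with hc
  have hyc : y * c = 1/2 := by rw [hc]; field_simp
  have hc1 : 1/2 ≤ c := by rw [hc]; rw [div_le_div_iff₀] <;> nlinarith
  have hc2 : c ≤ 1 := by rw [hc]; rw [div_le_one] <;> nlinarith
  have hcont : Continuous fun z : ℝ => min (1/2) (1 - y*z) :=
    (continuous_const).min (continuous_const.sub (continuous_const.mul continuous_id))
  have hsplit : ∫ z in (1/2:ℝ)..1, min (1/2) (1 - y*z)
      = (∫ z in (1/2:ℝ)..c, min (1/2) (1 - y*z)) + ∫ z in c..1, min (1/2) (1 - y*z) :=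
    (intervalIntegral.integral_add_adjacent_intervals (hcont.intervalIntegrable _ _)
      (hcont.intervalIntegrable _ _)).symm
  have h1 : ∫ z in (1/2:ℝ)..c, min (1/2) (1 - y*z) = ∫ z in (1/2:ℝ)..c, (1/2:ℝ) := by
    apply intervalIntegral.integral_congr
    intro z hz
    rw [Set.uIcc_of_le hc1] at hz
    have : y * z ≤ 1/2 := by nlinarith [hz.2]
    exact min_eq_left (by linarith)
  have h2 : ∫ z in c..1, min (1/2) (1 - y*z) = ∫ z in c..1, (1 - y*z) := by
    apply intervalIntegral.integral_congr
    intro z hz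
    rw [Set.uIcc_of_le hc2] at hz
    have : 1/2 ≤ y * z := by nlinarith [hz.1]
    exact min_eq_right (by linarith)
  have h3 : ∫ z in c..1, (1 - y*z) = (1 - y*1^2/2) - (c - y*c^2/2) := by
    apply intervalIntegral.integral_eq_sub_of_hasDerivAt (f := fun z => z - y*z^2/2)
    · intro x _
      have hd := (hasDerivAt_id x).sub (((hasDerivAt_pow 2 x).const_mul y).div_const 2)
      convert hd using 1
      · rfl
      simp; ring
    · exact (continuous_const.sub (continuous_const.mul continuous_id')).intervalIntegrable _ _
  rw [hsplit, h1, h2, h3, intervalIntegral.integral_const]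
  have hcc : c = 1/(2*y) := hc
  simp only [smul_eq_mul]
  rw [hcc]
  field_simp
  ring

private lemma outer_int :
    ∫ y in (1/2:ℝ)..1, (3/4 - y/2 - 1/(8*y)) = 3/16 - Real.log 2 / 8 := by
  have key : ∫ y in (1/2:ℝ)..1, (3/4 - y/2 - 1/(8*y))
      = (3/4*1 - 1^2/4 - Real.log 1 / 8) - (3/4*(1/2) - (1/2)^2/4 - Real.log (1/2) / 8) := by
    apply intervalIntegral.integral_eq_sub_of_hasDerivAt
      (f := fun y => 3/4*y - y^2/4 - Real.log y / 8)
    · intro x hx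
      rw [Set.uIcc_of_le (by norm_num : (1/2:ℝ) ≤ 1)] at hx
      have hx0 : x ≠ 0 := by intro h; rw [h] at hx; linarith [hx.1]
      have hd := (((hasDerivAt_id x).const_mul (3/4:ℝ)).sub
        ((hasDerivAt_pow 2 x).div_const 4)).sub ((Real.hasDerivAt_log hx0).div_const 8)
      convert hd using 1
      · rfl
      field_simp
      ring
    · apply ContinuousOn.intervalIntegrable
      apply ContinuousOn.sub
      · exact (continuousOn_const.sub (continuousOn_id.div_const 2))
      · apply ContinuousOn.div continuousOn_const
        · exact continuousOn_const.mul continuousOn_id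
        · intro x hx
          rw [Set.uIcc_of_le (by norm_num : (1/2:ℝ) ≤ 1)] at hx
          have : (0:ℝ) < x := by linarith [hx.1]
          positivity
  rw [key, Real.log_one, one_div, Real.log_inv]
  ring

theorem vol_C3_II :
    volume {p : ℝ × ℝ × ℝ |
        0 ≤ p.1 ∧ p.1 < 1/2 ∧ 1/2 < p.2.1 ∧ p.2.1 ≤ 1 ∧ 1/2 < p.2.2 ∧ p.2.2 ≤ 1 ∧
        p.1 + p.2.1 * p.2.2 ≤ 1}
      = ENNReal.ofReal (3/16 - Real.log 2 / 8) := by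
  set A : Set (ℝ × ℝ × ℝ) := {p : ℝ × ℝ × ℝ |
      0 ≤ p.1 ∧ p.1 < 1/2 ∧ 1/2 < p.2.1 ∧ p.2.1 ≤ 1 ∧ 1/2 < p.2.2 ∧ p.2.2 ≤ 1 ∧
      p.1 + p.2.1 * p.2.2 ≤ 1} with hA
  have hmeas : MeasurableSet A := by
    rw [hA]
    apply MeasurableSet.inter (measurable_fst measurableSet_Ici)
    apply MeasurableSet.inter (measurable_fst measurableSet_Iio)
    apply MeasurableSet.inter ((measurable_fst.comp measurable_snd) measurableSet_Ioi)
    apply MeasurableSet.inter ((measurable_fst.comp measurable_snd) measurableSet_Iic)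
    apply MeasurableSet.inter ((measurable_snd.comp measurable_snd) measurableSet_Ioi)
    apply MeasurableSet.inter ((measurable_snd.comp measurable_snd) measurableSet_Iic)
    exact measurableSet_le (measurable_fst.add
      ((measurable_fst.comp measurable_snd).mul (measurable_snd.comp measurable_snd)))
      measurable_const
  set box : Set (ℝ × ℝ) := Set.Ioc (1/2:ℝ) 1 ×ˢ Set.Ioc (1/2:ℝ) 1 with hbox
  have hsec : ∀ q : ℝ × ℝ, volume ((fun x => (x, q)) ⁻¹' A)
      = Set.indicator box (fun q => ENNReal.ofReal (min (1/2) (1 - q.1*q.2))) q := by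
    intro q
    by_cases hq : q ∈ box
    · rw [Set.indicator_of_mem hq]
      obtain ⟨⟨hq1, hq2⟩, hq3, hq4⟩ := hq
      have hkey : ((fun x => (x, q)) ⁻¹' A) = {x : ℝ | 0 ≤ x ∧ x < 1/2 ∧ x ≤ 1 - q.1*q.2} := by
        ext x
        simp only [hA, Set.mem_preimage, Set.mem_setOf_eq]
        constructor
        · rintro ⟨a, b, _, _, _, _, g⟩; exact ⟨a, b, by linarith⟩
        · rintro ⟨a, b, g⟩; exact ⟨a, b, hq1, hq2, hq3, hq4, by linarith⟩
      rw [hkey]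
      exact sec_vol _ (by nlinarith)
    · rw [Set.indicator_of_notMem hq]
      have : ((fun x => (x, q)) ⁻¹' A) = ∅ := by
        ext x
        simp only [hA, Set.mem_preimage, Set.mem_setOf_eq, Set.mem_empty_iff_false, iff_false]
        rintro ⟨_, _, c, d, e, f, _⟩
        exact hq ⟨⟨c, d⟩, e, f⟩
      simp [this]
  have hboxmeas : MeasurableSet box := measurableSet_Ioc.prod measurableSet_Ioc
  rw [show (volume : Measure (ℝ × ℝ × ℝ)) = Measure.prod volume volume from rfl,
    Measure.prod_apply_symm hmeas]
  calc ∫⁻ q : ℝ × ℝ, volume ((fun x => (x, q)) ⁻¹' A)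
      = ∫⁻ q : ℝ × ℝ, Set.indicator box
          (fun q => ENNReal.ofReal (min (1/2) (1 - q.1*q.2))) q := by
        exact lintegral_congr hsec
    _ = ∫⁻ q in box, ENNReal.ofReal (min (1/2) (1 - q.1*q.2)) := by
        rw [lintegral_indicator hboxmeas]
    _ = ∫⁻ y in Set.Ioc (1/2:ℝ) 1, ∫⁻ z in Set.Ioc (1/2:ℝ) 1,
          ENNReal.ofReal (min (1/2) (1 - y*z)) := by
        rw [hbox, show (volume : Measure (ℝ × ℝ)) = Measure.prod volume volume from rfl,
          ← Measure.prod_restrict]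
        exact lintegral_prod _ ((ENNReal.continuous_ofReal.comp
          (continuous_const.min (continuous_const.sub
            ((continuous_fst.mul continuous_snd))))).measurable.aemeasurable)
    _ = ∫⁻ y in Set.Ioc (1/2:ℝ) 1, ENNReal.ofReal (3/4 - y/2 - 1/(8*y)) := by
        apply setLIntegral_congr_fun measurableSet_Ioc
        intro y hy
        dsimp only
        rw [show (∫⁻ z in Set.Ioc (1/2:ℝ) 1, ENNReal.ofReal (min (1/2) (1 - y*z)))
            = ENNReal.ofReal (∫ z in (1/2:ℝ)..1, min (1/2) (1 - y*z)) from ?_, inner_int y hy]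
        rw [intervalIntegral.integral_of_le (by norm_num : (1/2:ℝ) ≤ 1)]
        refine (ofReal_integral_eq_lintegral_ofReal ?_ ?_).symm
        · exact (continuous_const.min (continuous_const.sub
            (continuous_const.mul continuous_id'))).integrableOn_Ioc
        · filter_upwards [ae_restrict_mem measurableSet_Ioc] with z hz
          have : y * z ≤ 1 := by nlinarith [hy.1, hy.2, hz.1, hz.2]
          simp [le_min_iff]
          linarith
    _ = ENNReal.ofReal (∫ y in (1/2:ℝ)..1, (3/4 - y/2 - 1/(8*y))) := by
        rw [intervalIntegral.integral_of_le (by norm_num : (1/2:ℝ) ≤ 1)]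
        refine (ofReal_integral_eq_lintegral_ofReal ?_ ?_).symm
        · apply IntegrableOn.mono_set ?_ Set.Ioc_subset_Icc_self
          apply ContinuousOn.integrableOn_Icc
          apply ContinuousOn.sub
          · exact continuousOn_const.sub (continuousOn_id.div_const 2)
          · apply ContinuousOn.div continuousOn_const
            · exact continuousOn_const.mul continuousOn_id
            · intro x hx
              have : (0:ℝ) < x := by have := hx.1; norm_num at this ⊢; linarith
              positivity
        · filter_upwards [ae_restrict_mem measurableSet_Ioc] with y hy
          have h1 := hy.1; have h2 := hy.2
          have hfac : (0:ℝ) ≤ (1-y)*(y-1/2) := mul_nonneg (by linarith) (by linarith)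
          have hy0 : (0:ℝ) < 8*y := by linarith
          have hh : 1/(8*y) ≤ 3/4 - y/2 := by
            rw [div_le_iff₀ hy0]
            nlinarith [hfac]
          simp only [Pi.zero_apply]
          linarith
    _ = ENNReal.ofReal (3/16 - Real.log 2 / 8) := by rw [outer_int]
end

section
/- Let ω = (√5 − 1)/2. The volume of the region C_3^{(I)} = {(x,y,z) ∈ [0,1]^3 : 1/2 < x, x ≤ y ≤ 1, x ≤ z ≤ 1, x + yz ≤ 1} equals (ln 2)/8 − ln(2ω) + 11ω/12 − 7/16. -/
open MeasureTheory Set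

noncomputable def gfun (x : ℝ) : ℝ :=
  (1 - x) * Real.log (1 - x) - 2 * (1 - x) * Real.log x - (1 - x) + x ^ 2

lemma inner_integral {x : ℝ} (hx0 : 0 < x) (hx1 : x < 1) :
    ∫ y in x..((1 - x) / x), ((1 - x) / y - x) = gfun x := by
  have hc : (0:ℝ) < 1 - x := by linarith
  have hcx : (0:ℝ) < (1 - x) / x := div_pos hc hx0
  have hpos : ∀ y ∈ Set.uIcc x ((1 - x) / x), 0 < y := by
    intro y hy
    rcases Set.mem_uIcc.1 hy with ⟨h, _⟩ | ⟨h, _⟩ <;> linarith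
  have hderiv : ∀ y ∈ Set.uIcc x ((1 - x) / x),
      HasDerivAt (fun y => (1 - x) * Real.log y - x * y) ((1 - x) / y - x) y := by
    intro y hy
    have hy0 := hpos y hy
    have h1 := ((Real.hasDerivAt_log hy0.ne').const_mul (1 - x)).sub
      ((hasDerivAt_id y).const_mul x)
    exact h1.congr_deriv (by ring)
  have hint : IntervalIntegrable (fun y => (1 - x) / y - x) volume x ((1 - x) / x) := by
    apply ContinuousOn.intervalIntegrable
    exact (continuousOn_const.div continuousOn_id fun y hy => (hpos y hy).ne').sub
      continuousOn_const
  rw [intervalIntegral.integral_eq_sub_of_hasDerivAt hderiv hint]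
  rw [Real.log_div hc.ne' hx0.ne']
  unfold gfun
  field_simp
  ring

lemma area2 {ω x : ℝ} (hsq : ω ^ 2 = 1 - ω) (hω1 : ω < 1) (hx : x ∈ Set.Ioc (1/2 : ℝ) ω) :
    volume {q : ℝ × ℝ | x ≤ q.1 ∧ q.1 ≤ 1 ∧ x ≤ q.2 ∧ q.2 ≤ 1 ∧ x + q.1 * q.2 ≤ 1}
      = ENNReal.ofReal (gfun x) := by
  obtain ⟨hx12, hxω⟩ := hx
  have hx0 : (0:ℝ) < x := by linarith
  have hx1 : x < 1 := lt_of_le_of_lt hxω hω1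
  have hc : (0:ℝ) < 1 - x := by linarith
  have hxc : x ≤ (1 - x) / x := by
    rw [le_div_iff₀ hx0]
    nlinarith
  set A : Set (ℝ × ℝ) :=
    {q : ℝ × ℝ | x ≤ q.1 ∧ q.1 ≤ 1 ∧ x ≤ q.2 ∧ q.2 ≤ 1 ∧ x + q.1 * q.2 ≤ 1} with hA
  have hmeas : MeasurableSet A := by
    apply MeasurableSet.inter (measurableSet_le measurable_const measurable_fst)
    apply MeasurableSet.inter (measurableSet_le measurable_fst measurable_const)
    apply MeasurableSet.inter (measurableSet_le measurable_const measurable_snd)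
    apply MeasurableSet.inter (measurableSet_le measurable_snd measurable_const)
    exact measurableSet_le (measurable_const.add (measurable_fst.mul measurable_snd))
      measurable_const
  rw [Measure.volume_eq_prod, Measure.prod_apply hmeas]
  have hslice : ∀ y : ℝ, volume (Prod.mk y ⁻¹' A)
      = (Set.Icc x ((1 - x) / x)).indicator (fun y => ENNReal.ofReal ((1 - x) / y - x)) y := by
    intro y
    by_cases hy : y ∈ Set.Icc x ((1 - x) / x)
    · have hy0 : (0:ℝ) < y := lt_of_lt_of_le hx0 hy.1
      rw [Set.indicator_of_mem hy]
      have hset : Prod.mk y ⁻¹' A = Set.Icc x ((1 - x) / y) := by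
        ext z
        simp only [hA, Set.mem_preimage, Set.mem_setOf_eq, Set.mem_Icc]
        constructor
        · rintro ⟨h1, h2, h3, h4, h5⟩
          exact ⟨h3, by rw [le_div_iff₀ hy0]; nlinarith⟩
        · rintro ⟨h1, h2⟩
          have hzy : y * z ≤ 1 - x := by
            have := (le_div_iff₀ hy0).1 h2
            nlinarith
          have hd1 : (1 - x) / y ≤ 1 := by
            rw [div_le_one hy0]
            linarith [hy.1]
          refine ⟨hy.1, ?_, h1, by linarith, by linarith⟩
          have := (le_div_iff₀ hx0).1 hy.2
          nlinarith
      rw [hset, Real.volume_Icc]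
    · rw [Set.indicator_of_notMem hy]
      have hset : Prod.mk y ⁻¹' A = ∅ := by
        ext z
        simp only [hA, Set.mem_preimage, Set.mem_setOf_eq, Set.mem_empty_iff_false,
          iff_false, not_and]
        intro h1 h2 h3 h4
        rw [Set.mem_Icc, not_and] at hy
        have h6 : (1 - x) / x < y := lt_of_not_ge (hy h1)
        have h7 : 1 - x < x * y := by
          have := (div_lt_iff₀ hx0).1 h6
          nlinarith
        have hy0 : (0:ℝ) < y := by linarith
        nlinarith
      rw [hset]
      simp
  rw [lintegral_congr hslice, lintegral_indicator measurableSet_Icc]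
  have hcont : ContinuousOn (fun y : ℝ => (1 - x) / y - x) (Set.Icc x ((1 - x) / x)) := by
    apply ContinuousOn.sub _ continuousOn_const
    exact continuousOn_const.div continuousOn_id fun y hy => (lt_of_lt_of_le hx0 hy.1).ne'
  have hint : IntegrableOn (fun y : ℝ => (1 - x) / y - x) (Set.Icc x ((1 - x) / x)) :=
    hcont.integrableOn_Icc
  have hnn : 0 ≤ᵐ[volume.restrict (Set.Icc x ((1 - x) / x))]
      fun y : ℝ => (1 - x) / y - x := by
    refine (ae_restrict_iff' measurableSet_Icc).2 (ae_of_all _ fun y hy => ?_)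
    have hy0 : (0:ℝ) < y := lt_of_lt_of_le hx0 hy.1
    have : x ≤ (1 - x) / y := by
      rw [le_div_iff₀ hy0]
      have := (le_div_iff₀ hx0).1 hy.2
      nlinarith
    show (0:ℝ) ≤ (1 - x) / y - x
    linarith
  rw [← ofReal_integral_eq_lintegral_ofReal hint hnn,
    MeasureTheory.integral_Icc_eq_integral_Ioc, ← intervalIntegral.integral_of_le hxc,
    inner_integral hx0 hx1]

noncomputable def Ffun (x : ℝ) : ℝ :=
  -((1 - x) ^ 2 / 2) * Real.log (1 - x) - (2 * x - x ^ 2) * Real.log x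
    + (1 - x) ^ 2 / 4 + x + x ^ 3 / 3

lemma hasDeriv_F {x : ℝ} (hx0 : 0 < x) (hx1 : x < 1) : HasDerivAt Ffun (gfun x) x := by
  have hc : (0:ℝ) < 1 - x := by linarith
  have hl1 : HasDerivAt (fun t : ℝ => Real.log (1 - t)) (-(1 - x)⁻¹) x := by
    have h := (Real.hasDerivAt_log hc.ne').comp x
      ((hasDerivAt_const x (1:ℝ)).sub (hasDerivAt_id x))
    exact h.congr_deriv (by ring)
  have hl2 : HasDerivAt Real.log x⁻¹ x := Real.hasDerivAt_log hx0.ne'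
  have hp1 : HasDerivAt (fun t : ℝ => -((1 - t) ^ 2 / 2)) (1 - x) x := by
    have h := ((((hasDerivAt_id x).const_sub 1).pow 2).div_const 2).neg
    exact h.congr_deriv (by norm_num; ring)
  have hp2 : HasDerivAt (fun t : ℝ => 2 * t - t ^ 2) (2 - 2 * x) x := by
    have h := ((hasDerivAt_id x).const_mul 2).sub ((hasDerivAt_id x).pow 2)
    exact h.congr_deriv (by norm_num)
  have hp3 : HasDerivAt (fun t : ℝ => (1 - t) ^ 2 / 4 + t + t ^ 3 / 3)
      (-(1 - x) / 2 + 1 + x ^ 2) x := by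
    have h := ((((hasDerivAt_id x).const_sub 1).pow 2).div_const 4).add
      ((hasDerivAt_id x)) |>.add (((hasDerivAt_id x).pow 3).div_const 3)
    exact h.congr_deriv (by norm_num; ring)
  have key := ((hp1.mul hl1).sub (hp2.mul hl2)).add hp3
  have hFeq : Ffun = fun t : ℝ =>
      (-((1 - t) ^ 2 / 2) * Real.log (1 - t) - (2 * t - t ^ 2) * Real.log t)
        + ((1 - t) ^ 2 / 4 + t + t ^ 3 / 3) := by
    funext t; unfold Ffun; ring
  rw [hFeq]
  refine key.congr_deriv ?_
  unfold gfun
  field_simp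
  ring

theorem vol_C3_I (ω : ℝ) (hω : ω = (Real.sqrt 5 - 1) / 2) :
    volume {p : ℝ × ℝ × ℝ |
        1/2 < p.1 ∧ p.1 ≤ p.2.1 ∧ p.2.1 ≤ 1 ∧ p.1 ≤ p.2.2 ∧ p.2.2 ≤ 1 ∧
        p.1 + p.2.1 * p.2.2 ≤ 1}
      = ENNReal.ofReal (Real.log 2 / 8 - Real.log (2 * ω) + 11 * ω / 12 - 7/16) := by
  have h5 : Real.sqrt 5 ^ 2 = 5 := Real.sq_sqrt (by norm_num)
  have hs0 : (0:ℝ) ≤ Real.sqrt 5 := Real.sqrt_nonneg 5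
  have hω12 : (1:ℝ)/2 < ω := by rw [hω]; nlinarith
  have hω1 : ω < 1 := by rw [hω]; nlinarith
  have hsq : ω ^ 2 = 1 - ω := by rw [hω]; linear_combination h5 / 4
  have hω0 : (0:ℝ) < ω := by linarith
  set S : Set (ℝ × ℝ × ℝ) := {p : ℝ × ℝ × ℝ |
      1/2 < p.1 ∧ p.1 ≤ p.2.1 ∧ p.2.1 ≤ 1 ∧ p.1 ≤ p.2.2 ∧ p.2.2 ≤ 1 ∧
      p.1 + p.2.1 * p.2.2 ≤ 1} with hS
  have hy' : Measurable fun p : ℝ × ℝ × ℝ => p.2.1 := measurable_fst.comp measurable_snd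
  have hz' : Measurable fun p : ℝ × ℝ × ℝ => p.2.2 := measurable_snd.comp measurable_snd
  have hSm : MeasurableSet S := by
    apply MeasurableSet.inter (measurableSet_lt measurable_const measurable_fst)
    apply MeasurableSet.inter (measurableSet_le measurable_fst hy')
    apply MeasurableSet.inter (measurableSet_le hy' measurable_const)
    apply MeasurableSet.inter (measurableSet_le measurable_fst hz')
    apply MeasurableSet.inter (measurableSet_le hz' measurable_const)
    exact measurableSet_le (measurable_fst.add (hy'.mul hz')) measurable_const
  rw [Measure.volume_eq_prod, Measure.prod_apply hSm]
  have hslice : ∀ x : ℝ, volume (Prod.mk x ⁻¹' S)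
      = (Set.Ioc (1/2 : ℝ) ω).indicator (fun x => ENNReal.ofReal (gfun x)) x := by
    intro x
    by_cases hx : x ∈ Set.Ioc (1/2 : ℝ) ω
    · rw [Set.indicator_of_mem hx, ← area2 hsq hω1 hx]
      congr 1
      ext q
      simp only [hS, Set.mem_preimage, Set.mem_setOf_eq]
      exact ⟨fun h => h.2, fun h => ⟨hx.1, h⟩⟩
    · rw [Set.indicator_of_notMem hx]
      have hempty : Prod.mk x ⁻¹' S = ∅ := by
        ext q
        simp only [hS, Set.mem_preimage, Set.mem_setOf_eq, Set.mem_empty_iff_false,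
          iff_false, not_and]
        intro h1 h2 h3 h4 h5'
        rw [Set.mem_Ioc, not_and] at hx
        have hxω : ω < x := lt_of_not_ge (hx h1)
        nlinarith
      rw [hempty]
      simp
  rw [lintegral_congr hslice, lintegral_indicator measurableSet_Ioc]
  have hgc : ContinuousOn gfun (Set.Icc (1/2 : ℝ) ω) := by
    have c1 : ContinuousOn (fun x : ℝ => Real.log (1 - x)) (Set.Icc (1/2 : ℝ) ω) := by
      apply ContinuousOn.log (continuousOn_const.sub continuousOn_id)
      intro x hx
      have h2 := hx.2
      intro h
      simp only [Pi.sub_apply, id_eq] at h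
      linarith
    have c2 : ContinuousOn Real.log (Set.Icc (1/2 : ℝ) ω) := by
      apply ContinuousOn.log continuousOn_id
      intro x hx
      have := hx.1
      positivity
    unfold gfun
    exact (((continuousOn_const.sub continuousOn_id).mul c1).sub
      ((continuousOn_const.mul (continuousOn_const.sub continuousOn_id)).mul c2)).sub
      (continuousOn_const.sub continuousOn_id) |>.add (continuousOn_id.pow 2)
  have hgint : IntegrableOn gfun (Set.Ioc (1/2 : ℝ) ω) :=
    hgc.integrableOn_Icc.mono_set Set.Ioc_subset_Icc_self
  have hgnn : 0 ≤ᵐ[volume.restrict (Set.Ioc (1/2 : ℝ) ω)] gfun := by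
    refine (ae_restrict_iff' measurableSet_Ioc).2 (ae_of_all _ fun x hx => ?_)
    have hx0 : (0:ℝ) < x := by linarith [hx.1]
    have hx1 : x < 1 := lt_of_le_of_lt hx.2 hω1
    have hxc : x ≤ (1 - x) / x := by
      rw [le_div_iff₀ hx0]
      nlinarith [hx.1, hx.2]
    rw [← inner_integral hx0 hx1]
    apply intervalIntegral.integral_nonneg hxc
    intro y hy
    have hy0 : (0:ℝ) < y := lt_of_lt_of_le hx0 hy.1
    have : x ≤ (1 - x) / y := by
      rw [le_div_iff₀ hy0]
      have := (le_div_iff₀ hx0).1 hy.2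
      nlinarith
    linarith
  rw [← ofReal_integral_eq_lintegral_ofReal hgint hgnn,
    ← intervalIntegral.integral_of_le hω12.le]
  have hFTC : ∫ x in (1/2 : ℝ)..ω, gfun x = Ffun ω - Ffun (1/2) := by
    apply intervalIntegral.integral_eq_sub_of_hasDerivAt
    · intro x hx
      rw [Set.uIcc_of_le hω12.le] at hx
      exact hasDeriv_F (by linarith [hx.1]) (lt_of_le_of_lt hx.2 hω1)
    · exact (Set.uIcc_of_le hω12.le ▸ hgc).intervalIntegrable
  rw [hFTC]
  congr 1
  unfold Ffun
  have e1 : (1:ℝ) - ω = ω ^ 2 := by linarith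
  have e2 : (1:ℝ) - 1/2 = 1/2 := by norm_num
  have e3 : Real.log ((1:ℝ)/2) = -Real.log 2 := by rw [one_div, Real.log_inv]
  rw [e1, e2, e3, Real.log_pow, Real.log_mul two_ne_zero hω0.ne']
  push_cast
  linear_combination ((-ω^2 + ω - 1) * Real.log ω + (ω^2 - ω + 1)/4 + ω/3 - 1/12) * hsq
end

section
/- The probability that a uniformly random triple (x,y,z) ∈ [0,1]^3 is nontransitive (i.e., lies in the set of triples satisfying Trybula's cyclicity conditions with all three coordinates > 1/2) equals (11√5)/8 − 43/16 − 3 ln(√5 − 1) + (3 ln 2)/8. -/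
open MeasureTheory

def Trybula (x y z : ℝ) : Prop :=
  min (x + y * z) (min (y + z * x) (z + x * y)) ≤ 1 ∧
  min ((1 - x) + (1 - y) * (1 - z))
    (min ((1 - y) + (1 - z) * (1 - x)) ((1 - z) + (1 - x) * (1 - y))) ≤ 1

namespace ProbNT
open Set

noncomputable def m3 (x y : ℝ) : ℝ := max ((1-x)/y) (max ((1-y)/x) (1 - x*y))
noncomputable def jp (x y : ℝ) : ℝ := max 0 (min 1 (m3 x y) - 1/2)


noncomputable def g0 : ℝ := (Real.sqrt 5 - 1)/2
lemma g0_def : g0 = (Real.sqrt 5 - 1)/2 := rfl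

lemma s5 : Real.sqrt 5 * Real.sqrt 5 = 5 := Real.mul_self_sqrt (by norm_num)
lemma s5_gt : 2 < Real.sqrt 5 := by
  have := s5
  nlinarith [Real.sqrt_nonneg 5]
lemma s5_lt : Real.sqrt 5 < 9/4 := by
  have := s5
  nlinarith [Real.sqrt_nonneg 5]
lemma g0_gt : 1/2 < g0 := by unfold g0; linarith [s5_gt]
lemma g0_lt : g0 < 5/8 := by unfold g0; linarith [s5_lt]
lemma g0_sq : g0^2 = 1 - g0 := by
  unfold g0; have := s5; ring_nf; nlinarith [s5]

lemma jp_eq_of {x y v : ℝ} (hm : m3 x y = v) (h1 : v ≤ 1) (h2 : 1/2 ≤ v) :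
    jp x y = v - 1/2 := by
  rw [jp, hm, min_eq_right h1, max_eq_right (by linarith)]

lemma jp_eq_zero {x y : ℝ} (h : m3 x y ≤ 1/2) : jp x y = 0 := by
  rw [jp, max_eq_left]
  have := min_le_right (1:ℝ) (m3 x y)
  linarith

lemma m3_eqA {x y : ℝ} (h1 : (1-y)/x ≤ (1-x)/y) (h2 : 1-x*y ≤ (1-x)/y) :
    m3 x y = (1-x)/y := by rw [m3, max_eq_left (max_le h1 h2)]
lemma m3_eqB {x y : ℝ} (h1 : (1-x)/y ≤ (1-y)/x) (h2 : 1-x*y ≤ (1-y)/x) :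
    m3 x y = (1-y)/x := by
  rw [m3, max_eq_right (h1.trans (le_max_left _ _)), max_eq_left h2]
lemma m3_eqC {x y : ℝ} (h1 : (1-x)/y ≤ 1-x*y) (h2 : (1-y)/x ≤ 1-x*y) :
    m3 x y = 1 - x*y := by
  rw [m3, max_eq_right (h1.trans (le_max_right _ _)), max_eq_right h2]

lemma aux1 {x y : ℝ} (h2 : x ≤ g0) (hy2 : y ≤ x) (hy0 : 0 < y) : y*(1+x) ≤ 1 := by
  have t1 : 0 ≤ (g0 - x)*(1+g0+x) := mul_nonneg (by linarith) (by linarith [g0_gt, hy0])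
  have t2 : 0 ≤ (x - y)*(1+x) := mul_nonneg (by linarith) (by nlinarith [hy0])
  nlinarith [g0_sq]

-- CASE 1 branch lemmas : 1/2 ≤ x ≤ g0
lemma br1_1 {x y : ℝ} (h1 : 1/2 ≤ x) (h2 : x ≤ g0) (hy1 : 1/2 ≤ y) (hy2 : y ≤ x) :
    jp x y = (1-y)/x - 1/2 := by
  have hg := g0_sq
  have hgl := g0_lt
  have hx0 : (0:ℝ) < x := by linarith
  have hy0 : (0:ℝ) < y := by linarith
  have hx1 : x < 1 := by linarith
  have ha := aux1 h2 hy2 hy0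
  apply jp_eq_of (m3_eqB ?_ ?_) ?_ ?_
  · rw [div_le_div_iff₀ hy0 hx0]
    nlinarith [mul_nonneg (sub_nonneg.2 hy2) (by linarith : (0:ℝ) ≤ x + y - 1)]
  · rw [le_div_iff₀ hx0]
    nlinarith [mul_nonneg (by linarith : (0:ℝ) ≤ 1 - x) (by linarith : (0:ℝ) ≤ 1 - y*(1+x))]
  · rw [div_le_one hx0]; linarith
  · rw [le_div_iff₀ hx0]; linarith

lemma br1_2 {x y : ℝ} (h1 : 1/2 ≤ x) (h2 : x ≤ g0) (hy1 : x ≤ y) (hy2 : y ≤ (1-x)/x) :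
    jp x y = (1-x)/y - 1/2 := by
  have hg := g0_sq
  have hgl := g0_lt
  have hx0 : (0:ℝ) < x := by linarith
  have hy0 : (0:ℝ) < y := by linarith
  have hx1 : x < 1 := by linarith
  have hy2' : y * x ≤ 1 - x := (le_div_iff₀ hx0).1 hy2
  have hy1' : y ≤ 1 := by nlinarith
  apply jp_eq_of (m3_eqA ?_ ?_) ?_ ?_
  · rw [div_le_div_iff₀ hx0 hy0]
    nlinarith [mul_nonneg (sub_nonneg.2 hy1) (by linarith : (0:ℝ) ≤ x + y - 1)]
  · rw [le_div_iff₀ hy0]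
    nlinarith [mul_nonneg (by linarith : (0:ℝ) ≤ 1 - y) (by linarith : (0:ℝ) ≤ 1 - x*(1+y))]
  · rw [div_le_one hy0]; linarith
  · rw [le_div_iff₀ hy0]; nlinarith

lemma br1_3 {x y : ℝ} (h1 : 1/2 ≤ x) (h2 : x ≤ g0) (hy1 : (1-x)/x ≤ y) (hy2 : y ≤ 1/(2*x)) :
    jp x y = 1/2 - x*y := by
  have hg := g0_sq
  have hgl := g0_lt
  have hx0 : (0:ℝ) < x := by linarith
  have hx1 : x < 1 := by linarith
  have hy1' : 1 - x ≤ y * x := (div_le_iff₀ hx0).1 hy1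
  have hy0 : (0:ℝ) < y := by nlinarith
  have hy2' : y * (2*x) ≤ 1 := (le_div_iff₀ (by linarith)).1 hy2
  have hyle1 : y ≤ 1 := by nlinarith
  have hyx : x ≤ y := by
    have hb : x ≤ (1-x)/x := by rw [le_div_iff₀ hx0]; nlinarith
    linarith
  have hcore : 1 ≤ y * (1+x) := by nlinarith
  have heq := jp_eq_of (v := 1 - x*y) (m3_eqC ?_ ?_) ?_ ?_
  · rw [heq]; ring
  · rw [div_le_iff₀ hy0]
    nlinarith [mul_nonneg (by linarith : (0:ℝ) ≤ 1 - y) (by linarith : (0:ℝ) ≤ x*(1+y) - 1)]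
  · rw [div_le_iff₀ hx0]
    nlinarith [mul_nonneg (by linarith : (0:ℝ) ≤ 1 - x) (by linarith : (0:ℝ) ≤ y*(1+x) - 1)]
  · nlinarith
  · nlinarith

lemma br_zero {x y : ℝ} (h1 : 1/2 ≤ x) (h2 : x ≤ 1) (hy1 : 1/(2*x) ≤ y) (hy2 : y ≤ 1) :
    jp x y = 0 := by
  have hx0 : (0:ℝ) < x := by linarith
  have hy1' : 1 ≤ y * (2*x) := (div_le_iff₀ (by linarith)).1 hy1
  have hy0 : (0:ℝ) < y := by nlinarith
  apply jp_eq_zero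
  apply max_le
  · rw [div_le_iff₀ hy0]; nlinarith [sq_nonneg (2*x-1)]
  apply max_le
  · rw [div_le_iff₀ hx0]; nlinarith [sq_nonneg (1-x)]
  · nlinarith

lemma br2_1 {x y : ℝ} (h1 : g0 ≤ x) (h2 : x ≤ 1) (hy1 : 1/2 ≤ y) (hy2 : y ≤ 1/(1+x)) :
    jp x y = (1-y)/x - 1/2 := by
  have hg := g0_sq
  have hgg := g0_gt
  have hx0 : (0:ℝ) < x := by linarith
  have hy0 : (0:ℝ) < y := by linarith
  have hy2' : y * (1+x) ≤ 1 := (le_div_iff₀ (by linarith)).1 hy2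
  have hgx : 0 ≤ (x - g0)*(x + g0 + 1) := mul_nonneg (by linarith) (by linarith)
  have hyx : y ≤ x := by nlinarith
  apply jp_eq_of (m3_eqB ?_ ?_) ?_ ?_
  · rw [div_le_div_iff₀ hy0 hx0]
    nlinarith [mul_nonneg (sub_nonneg.2 hyx) (by linarith : (0:ℝ) ≤ x + y - 1)]
  · rw [le_div_iff₀ hx0]
    nlinarith [mul_nonneg (by linarith : (0:ℝ) ≤ 1 - x) (by linarith : (0:ℝ) ≤ 1 - y*(1+x))]
  · rw [div_le_one hx0]; linarith
  · rw [le_div_iff₀ hx0]; nlinarith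

lemma br2_2 {x y : ℝ} (h1 : g0 ≤ x) (h2 : x ≤ 1) (hy1 : 1/(1+x) ≤ y) (hy2 : y ≤ 1/(2*x)) :
    jp x y = 1/2 - x*y := by
  have hg := g0_sq
  have hgg := g0_gt
  have hx0 : (0:ℝ) < x := by linarith
  have hy1' : 1 ≤ y * (1+x) := (div_le_iff₀ (by linarith)).1 hy1
  have hy0 : (0:ℝ) < y := by nlinarith
  have hy2' : y * (2*x) ≤ 1 := (le_div_iff₀ (by linarith)).1 hy2
  have hyle1 : y ≤ 1 := by nlinarith
  have hgx : 0 ≤ (x - g0)*(x + g0 + 1) := mul_nonneg (by linarith) (by linarith)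
  have hcore : 1 ≤ x * (1+y) := by nlinarith
  have heq := jp_eq_of (v := 1 - x*y) (m3_eqC ?_ ?_) ?_ ?_
  · rw [heq]; ring
  · rw [div_le_iff₀ hy0]
    nlinarith [mul_nonneg (by linarith : (0:ℝ) ≤ 1 - y) (by linarith : (0:ℝ) ≤ x*(1+y) - 1)]
  · rw [div_le_iff₀ hx0]
    nlinarith [mul_nonneg (by linarith : (0:ℝ) ≤ 1 - x) (by linarith : (0:ℝ) ≤ y*(1+x) - 1)]
  · nlinarith
  · nlinarith

lemma jp_contOn {x : ℝ} (hx0 : 0 < x) : ContinuousOn (fun y => jp x y) (Icc (1/2:ℝ) 1) := by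
  have hA : ContinuousOn (fun y : ℝ => (1-x)/y) (Icc (1/2:ℝ) 1) :=
    ContinuousOn.div continuousOn_const continuousOn_id
      (fun y hy => (by linarith [hy.1] : (0:ℝ) < y).ne')
  have hB : Continuous fun y : ℝ => (1-y)/x := (continuous_const.sub continuous_id).div_const x
  have hC : Continuous fun y : ℝ => 1 - x*y := by fun_prop
  unfold jp m3
  exact continuousOn_const.sup ((continuousOn_const.inf
    (hA.sup (hB.continuousOn.sup hC.continuousOn))).sub continuousOn_const)

lemma jp_ii {x : ℝ} (hx0 : 0 < x) {a b : ℝ} (ha : a ∈ Icc (1/2:ℝ) 1)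
    (hb : b ∈ Icc (1/2:ℝ) 1) : IntervalIntegrable (fun y => jp x y) volume a b :=
  ((jp_contOn hx0).mono (Set.uIcc_subset_Icc ha hb)).intervalIntegrable

lemma hd1 {x : ℝ} (hx0 : x ≠ 0) (y : ℝ) :
    HasDerivAt (fun y : ℝ => (y - y^2/2)/x - y/2) ((1-y)/x - 1/2) y := by
  have h := (((hasDerivAt_id y).sub ((hasDerivAt_pow 2 y).div_const 2)).div_const x).sub
    ((hasDerivAt_id y).div_const 2)
  refine h.congr_deriv ?_
  field_simp
  push_cast [show (2:ℕ) - 1 = 1 from rfl, pow_one]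
  ring

lemma hd2 {x : ℝ} {y : ℝ} (hy : y ≠ 0) :
    HasDerivAt (fun y : ℝ => (1-x)*Real.log y - y/2) ((1-x)/y - 1/2) y := by
  have h := ((Real.hasDerivAt_log hy).const_mul (1-x)).sub ((hasDerivAt_id y).div_const 2)
  exact h.congr_deriv (by ring)

lemma hd3 (x y : ℝ) :
    HasDerivAt (fun y : ℝ => y/2 - x*y^2/2) (1/2 - x*y) y := by
  have h := ((hasDerivAt_id y).div_const 2).sub
    (((hasDerivAt_pow 2 y).const_mul x).div_const 2)
  refine h.congr_deriv ?_
  field_simp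
  ring

noncomputable def J' (x : ℝ) : ℝ := ∫ y in (1/2:ℝ)..1, jp x y

lemma J'_eq1 {x : ℝ} (h1 : 1/2 ≤ x) (h2 : x ≤ g0) :
    J' x = 5/4 - 3/(4*x) + (1-x)*(Real.log (1-x) - 2*Real.log x) := by
  have hg := g0_sq
  have hgl := g0_lt
  have hx0 : (0:ℝ) < x := by linarith
  have hx1 : x < 1 := by linarith
  set b := (1-x)/x with hbdef
  set c := 1/(2*x) with hcdef
  have hxb : x ≤ b := by rw [hbdef, le_div_iff₀ hx0]; nlinarith
  have hbc : b ≤ c := by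
    rw [hbdef, hcdef, div_le_div_iff₀ hx0 (by linarith)]; nlinarith
  have hc1 : c ≤ 1 := by rw [hcdef, div_le_one (by linarith)]; linarith
  have hb0 : (1:ℝ)/2 ≤ b := by linarith
  have hbmem : b ∈ Icc (1/2:ℝ) 1 := ⟨hb0, by linarith⟩
  have hcmem : c ∈ Icc (1/2:ℝ) 1 := ⟨by linarith, hc1⟩
  have hxmem : x ∈ Icc (1/2:ℝ) 1 := ⟨h1, by linarith⟩
  have h12 : (1/2:ℝ) ∈ Icc (1/2:ℝ) 1 := ⟨le_refl _, by norm_num⟩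
  have h1mem : (1:ℝ) ∈ Icc (1/2:ℝ) 1 := ⟨by norm_num, le_refl _⟩
  have split : J' x = (∫ y in (1/2:ℝ)..x, jp x y) + (∫ y in x..b, jp x y)
      + (∫ y in b..c, jp x y) + (∫ y in c..1, jp x y) := by
    rw [J']
    rw [← intervalIntegral.integral_add_adjacent_intervals (jp_ii hx0 h12 hxmem)
      (jp_ii hx0 hxmem h1mem)]
    rw [← intervalIntegral.integral_add_adjacent_intervals (jp_ii hx0 hxmem hbmem)
      (jp_ii hx0 hbmem h1mem)]
    rw [← intervalIntegral.integral_add_adjacent_intervals (jp_ii hx0 hbmem hcmem)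
      (jp_ii hx0 hcmem h1mem)]
    ring
  have Q1 : (∫ y in (1/2:ℝ)..x, jp x y) = ∫ y in (1/2:ℝ)..x, ((1-y)/x - 1/2) := by
    apply intervalIntegral.integral_congr
    intro y hy
    rw [uIcc_of_le h1] at hy
    exact br1_1 h1 h2 hy.1 hy.2
  have Q1' : (∫ y in (1/2:ℝ)..x, ((1-y)/x - 1/2))
      = ((x - x^2/2)/x - x/2) - ((1/2 - (1/2:ℝ)^2/2)/x - (1/2)/2) := by
    apply intervalIntegral.integral_eq_sub_of_hasDerivAt (f := fun y : ℝ => (y - y^2/2)/x - y/2)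
    · exact fun y _ => hd1 hx0.ne' y
    · exact ((by fun_prop : Continuous fun y : ℝ => (1-y)/x - 1/2)).intervalIntegrable _ _
  have Q2 : (∫ y in x..b, jp x y) = ∫ y in x..b, ((1-x)/y - 1/2) := by
    apply intervalIntegral.integral_congr
    intro y hy
    rw [uIcc_of_le hxb] at hy
    exact br1_2 h1 h2 hy.1 hy.2
  have Q2' : (∫ y in x..b, ((1-x)/y - 1/2))
      = ((1-x)*Real.log b - b/2) - ((1-x)*Real.log x - x/2) := by
    apply intervalIntegral.integral_eq_sub_of_hasDerivAt (f := fun y : ℝ => (1-x)*Real.log y - y/2)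
    · intro y hy
      rw [uIcc_of_le hxb] at hy
      exact hd2 (by linarith [hy.1] : (0:ℝ) < y).ne'
    · apply ContinuousOn.intervalIntegrable
      apply ContinuousOn.sub _ continuousOn_const
      apply ContinuousOn.div continuousOn_const continuousOn_id
      intro y hy
      rw [uIcc_of_le hxb] at hy
      have h0y : (0:ℝ) < y := by linarith [hy.1]
      simpa using h0y.ne'
  have Q3 : (∫ y in b..c, jp x y) = ∫ y in b..c, (1/2 - x*y) := by
    apply intervalIntegral.integral_congr
    intro y hy
    rw [uIcc_of_le hbc] at hy
    exact br1_3 h1 h2 hy.1 hy.2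
  have Q3' : (∫ y in b..c, (1/2 - x*y)) = (c/2 - x*c^2/2) - (b/2 - x*b^2/2) := by
    apply intervalIntegral.integral_eq_sub_of_hasDerivAt (f := fun y : ℝ => y/2 - x*y^2/2)
    · exact fun y _ => hd3 x y
    · exact ((by fun_prop : Continuous fun y : ℝ => 1/2 - x*y)).intervalIntegrable _ _
  have Q4 : (∫ y in c..1, jp x y) = 0 := by
    rw [intervalIntegral.integral_congr (g := fun _ => (0:ℝ))]
    · simp
    · intro y hy
      rw [uIcc_of_le hc1] at hy
      exact br_zero h1 (by linarith) hy.1 hy.2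
  rw [split, Q1, Q1', Q2, Q2', Q3, Q3', Q4]
  have hlb : Real.log b = Real.log (1-x) - Real.log x :=
    Real.log_div (by linarith) hx0.ne'
  rw [hlb, hbdef, hcdef]
  field_simp
  ring

lemma J'_eq2 {x : ℝ} (h1 : g0 ≤ x) (h2 : x ≤ 1) :
    J' x = (1-x)^2/(4*x*(1+x)) := by
  have hg := g0_sq
  have hgg := g0_gt
  have hx0 : (0:ℝ) < x := by linarith
  have hx2 : (0:ℝ) < 1 + x := by linarith
  set b := 1/(1+x) with hbdef
  set c := 1/(2*x) with hcdef
  have h12b : (1/2:ℝ) ≤ b := by rw [hbdef, le_div_iff₀ hx2]; linarith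
  have hbc : b ≤ c := by
    rw [hbdef, hcdef, div_le_div_iff₀ hx2 (by linarith)]; linarith
  have hc1 : c ≤ 1 := by rw [hcdef, div_le_one (by linarith)]; linarith
  have hbmem : b ∈ Icc (1/2:ℝ) 1 := ⟨h12b, by linarith⟩
  have hcmem : c ∈ Icc (1/2:ℝ) 1 := ⟨by linarith, hc1⟩
  have h12 : (1/2:ℝ) ∈ Icc (1/2:ℝ) 1 := ⟨le_refl _, by norm_num⟩
  have h1mem : (1:ℝ) ∈ Icc (1/2:ℝ) 1 := ⟨by norm_num, le_refl _⟩
  have split : J' x = (∫ y in (1/2:ℝ)..b, jp x y) + (∫ y in b..c, jp x y)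
      + (∫ y in c..1, jp x y) := by
    rw [J']
    rw [← intervalIntegral.integral_add_adjacent_intervals (jp_ii hx0 h12 hbmem)
      (jp_ii hx0 hbmem h1mem)]
    rw [← intervalIntegral.integral_add_adjacent_intervals (jp_ii hx0 hbmem hcmem)
      (jp_ii hx0 hcmem h1mem)]
    ring
  have Q1 : (∫ y in (1/2:ℝ)..b, jp x y) = ∫ y in (1/2:ℝ)..b, ((1-y)/x - 1/2) := by
    apply intervalIntegral.integral_congr
    intro y hy
    rw [uIcc_of_le h12b] at hy
    exact br2_1 h1 h2 hy.1 hy.2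
  have Q1' : (∫ y in (1/2:ℝ)..b, ((1-y)/x - 1/2))
      = ((b - b^2/2)/x - b/2) - ((1/2 - (1/2:ℝ)^2/2)/x - (1/2)/2) := by
    apply intervalIntegral.integral_eq_sub_of_hasDerivAt (f := fun y : ℝ => (y - y^2/2)/x - y/2)
    · exact fun y _ => hd1 hx0.ne' y
    · exact ((by fun_prop : Continuous fun y : ℝ => (1-y)/x - 1/2)).intervalIntegrable _ _
  have Q2 : (∫ y in b..c, jp x y) = ∫ y in b..c, (1/2 - x*y) := by
    apply intervalIntegral.integral_congr
    intro y hy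
    rw [uIcc_of_le hbc] at hy
    exact br2_2 h1 h2 hy.1 hy.2
  have Q2' : (∫ y in b..c, (1/2 - x*y)) = (c/2 - x*c^2/2) - (b/2 - x*b^2/2) := by
    apply intervalIntegral.integral_eq_sub_of_hasDerivAt (f := fun y : ℝ => y/2 - x*y^2/2)
    · exact fun y _ => hd3 x y
    · exact ((by fun_prop : Continuous fun y : ℝ => 1/2 - x*y)).intervalIntegrable _ _
  have Q3 : (∫ y in c..1, jp x y) = 0 := by
    rw [intervalIntegral.integral_congr (g := fun _ => (0:ℝ))]
    · simp
    · intro y hy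
      rw [uIcc_of_le hc1] at hy
      exact br_zero (by linarith) h2 hy.1 hy.2
  rw [split, Q1, Q1', Q2, Q2', Q3, hbdef, hcdef]
  field_simp
  ring

noncomputable def I1f (x : ℝ) : ℝ := 5/4 - 3/(4*x) + (1-x)*(Real.log (1-x) - 2*Real.log x)
noncomputable def I2f (x : ℝ) : ℝ := (1-x)^2/(4*x*(1+x))
noncomputable def F1 (x : ℝ) : ℝ :=
  (x^2 - 2*x - 3/4)*Real.log x - (1-x)^2/2*Real.log (1-x) + (1/4 + 11*x/4 - x^2/4)
noncomputable def F2 (x : ℝ) : ℝ := (Real.log x - 4*Real.log (1+x) + x)/4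

lemma hdF1 {x : ℝ} (hx0 : 0 < x) (hx1 : x < 1) : HasDerivAt F1 (I1f x) x := by
  have hu : HasDerivAt (fun x : ℝ => 1 - x) (-1) x := by
    simpa using (hasDerivAt_id x).const_sub 1
  have hp1 : HasDerivAt (fun x : ℝ => x^2 - 2*x - 3/4) (2*x - 2) x := by
    have := ((hasDerivAt_pow 2 x).sub ((hasDerivAt_id x).const_mul 2)).sub_const (3/4)
    refine this.congr_deriv ?_
    simp
  have hlog : HasDerivAt Real.log x⁻¹ x := Real.hasDerivAt_log hx0.ne'
  have hlog1 : HasDerivAt (fun x : ℝ => Real.log (1-x)) ((1-x)⁻¹ * (-1)) x :=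
    (Real.hasDerivAt_log (by linarith : (1:ℝ) - x ≠ 0)).comp x hu
  have hsq : HasDerivAt (fun x : ℝ => (1-x)^2/2) ((2*(1-x)^1) * (-1) / 2) x :=
    (((hasDerivAt_pow 2 (1-x)).comp x hu)).div_const 2
  have hpoly : HasDerivAt (fun x : ℝ => 1/4 + 11*x/4 - x^2/4) (11/4 - 2*x/4) x := by
    have := (((hasDerivAt_id x).const_mul 11).div_const 4).const_add (1/4)
      |>.sub ((hasDerivAt_pow 2 x).div_const 4)
    refine this.congr_deriv ?_
    simp
  have H := ((hp1.mul hlog).sub (hsq.mul hlog1)).add hpoly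
  refine H.congr_deriv ?_
  unfold I1f
  have h1x : (1:ℝ) - x ≠ 0 := by linarith
  field_simp
  ring

lemma hdF2 {x : ℝ} (hx0 : 0 < x) : HasDerivAt F2 (I2f x) x := by
  have hu : HasDerivAt (fun x : ℝ => 1 + x) 1 x := by
    simpa using (hasDerivAt_id x).const_add 1
  have hlog : HasDerivAt Real.log x⁻¹ x := Real.hasDerivAt_log hx0.ne'
  have hlog1 : HasDerivAt (fun x : ℝ => Real.log (1+x)) ((1+x)⁻¹ * 1) x :=
    (Real.hasDerivAt_log (by linarith : (1:ℝ) + x ≠ 0)).comp x hu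
  have H := ((hlog.sub (hlog1.const_mul 4)).add (hasDerivAt_id x)).div_const 4
  refine H.congr_deriv ?_
  unfold I2f
  have hx2 : (0:ℝ) < 1 + x := by linarith
  field_simp
  ring

lemma contI1 : ContinuousOn I1f (Icc (1/2:ℝ) g0) := by
  have hgl := g0_lt
  have c1 : ContinuousOn (fun x:ℝ => 3/(4*x)) (Icc (1/2:ℝ) g0) :=
    ContinuousOn.div continuousOn_const (by fun_prop)
      (fun x hx => by have := hx.1; positivity)
  have c2 : ContinuousOn (fun x:ℝ => Real.log (1-x)) (Icc (1/2:ℝ) g0) :=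
    ContinuousOn.log (by fun_prop) (fun x hx => by
      have h1 := hx.2; have : x < 1 := by linarith
      linarith)
  have c3 : ContinuousOn (fun x:ℝ => Real.log x) (Icc (1/2:ℝ) g0) :=
    ContinuousOn.log (by fun_prop) (fun x hx => by have := hx.1; positivity)
  unfold I1f
  exact (continuousOn_const.sub c1).add
    (((by fun_prop : Continuous fun x:ℝ => 1-x).continuousOn).mul
      (c2.sub (continuousOn_const.mul c3)))

lemma contI2 : ContinuousOn I2f (Icc g0 (1:ℝ)) := by
  have hgg := g0_gt
  unfold I2f
  apply ContinuousOn.div (by fun_prop) (by fun_prop)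
  intro x hx
  have h1 := hx.1
  have hx0 : (0:ℝ) < x := by linarith
  have hx2 : (0:ℝ) < 1 + x := by linarith
  positivity

lemma outer : (∫ x in Ioc (1/2:ℝ) 1, J' x) = F1 g0 - F1 (1/2) + (F2 1 - F2 g0) := by
  have hgl := g0_lt
  have hgg := g0_gt
  have hle1 : (1/2:ℝ) ≤ g0 := le_of_lt hgg
  have hle2 : g0 ≤ (1:ℝ) := by linarith
  have hE1 : EqOn J' I1f (Icc (1/2:ℝ) g0) := fun x hx => by
    rw [J'_eq1 hx.1 hx.2]; rfl
  have hE2 : EqOn J' I2f (Icc g0 (1:ℝ)) := fun x hx => by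
    rw [J'_eq2 hx.1 hx.2]; rfl
  have hi1 : IntervalIntegrable I1f volume (1/2) g0 := by
    apply ContinuousOn.intervalIntegrable
    rw [uIcc_of_le hle1]; exact contI1
  have hi2 : IntervalIntegrable I2f volume g0 1 := by
    apply ContinuousOn.intervalIntegrable
    rw [uIcc_of_le hle2]; exact contI2
  have hJ1 : IntervalIntegrable J' volume (1/2) g0 := by
    rw [intervalIntegrable_iff_integrableOn_Icc_of_le hle1]
    rw [intervalIntegrable_iff_integrableOn_Icc_of_le hle1] at hi1
    exact hi1.congr_fun (fun x hx => (hE1 hx).symm) measurableSet_Icc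
  have hJ2 : IntervalIntegrable J' volume g0 1 := by
    rw [intervalIntegrable_iff_integrableOn_Icc_of_le hle2]
    rw [intervalIntegrable_iff_integrableOn_Icc_of_le hle2] at hi2
    exact hi2.congr_fun (fun x hx => (hE2 hx).symm) measurableSet_Icc
  rw [← intervalIntegral.integral_of_le (by norm_num : (1/2:ℝ) ≤ 1)]
  rw [← intervalIntegral.integral_add_adjacent_intervals hJ1 hJ2]
  have e1 : (∫ x in (1/2:ℝ)..g0, J' x) = ∫ x in (1/2:ℝ)..g0, I1f x :=
    intervalIntegral.integral_congr (by rw [uIcc_of_le hle1]; exact hE1)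
  have e2 : (∫ x in g0..(1:ℝ), J' x) = ∫ x in g0..(1:ℝ), I2f x :=
    intervalIntegral.integral_congr (by rw [uIcc_of_le hle2]; exact hE2)
  have f1 : (∫ x in (1/2:ℝ)..g0, I1f x) = F1 g0 - F1 (1/2) := by
    apply intervalIntegral.integral_eq_sub_of_hasDerivAt
    · intro x hx
      rw [uIcc_of_le hle1] at hx
      exact hdF1 (by linarith [hx.1]) (by linarith [hx.2])
    · exact hi1
  have f2 : (∫ x in g0..(1:ℝ), I2f x) = F2 1 - F2 g0 := by
    apply intervalIntegral.integral_eq_sub_of_hasDerivAt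
    · intro x hx
      rw [uIcc_of_le hle2] at hx
      exact hdF2 (by linarith [hx.1])
    · exact hi2
  rw [e1, e2, f1, f2]

lemma final_val : F1 g0 - F1 (1/2) + (F2 1 - F2 g0)
    = 11 * Real.sqrt 5 / 8 - 43/16 - 3 * Real.log (Real.sqrt 5 - 1) + 3 * Real.log 2 / 8 := by
  have hg := g0_sq
  have hgg := g0_gt
  have hgl := g0_lt
  have hg0 : (0:ℝ) < g0 := by linarith
  have h1g : (1:ℝ) - g0 = g0^2 := by linarith
  have hlog1g : Real.log (1-g0) = 2 * Real.log g0 := by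
    rw [h1g, Real.log_pow]; push_cast; ring
  have hinv : (1:ℝ) + g0 = g0⁻¹ := by
    have hm : g0 * (1 + g0) = 1 := by nlinarith
    exact eq_inv_of_mul_eq_one_right hm
  have hlog1pg : Real.log (1+g0) = - Real.log g0 := by rw [hinv, Real.log_inv]
  have hlogg : Real.log g0 = Real.log (Real.sqrt 5 - 1) - Real.log 2 := by
    rw [g0_def]
    exact Real.log_div (by nlinarith [s5_gt] : Real.sqrt 5 - 1 ≠ 0) two_ne_zero
  have hloghalf : Real.log ((1:ℝ)/2) = - Real.log 2 := by
    rw [show (1/2:ℝ) = 2⁻¹ by norm_num, Real.log_inv]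
  unfold F1 F2
  rw [hlog1g, hlog1pg, hloghalf, Real.log_one, hlogg]
  rw [show (1:ℝ) - 1/2 = 1/2 by norm_num, hloghalf]
  rw [show (1:ℝ) + 1 = (2:ℝ) by norm_num, g0_def]
  linear_combination (-1/16 : ℝ) * s5

def S : Set (ℝ × ℝ × ℝ) := {p : ℝ × ℝ × ℝ |
        p.1 ∈ Set.Icc (0:ℝ) 1 ∧ p.2.1 ∈ Set.Icc (0:ℝ) 1 ∧ p.2.2 ∈ Set.Icc (0:ℝ) 1 ∧
        Trybula p.1 p.2.1 p.2.2 ∧ 1/2 < p.1 ∧ 1/2 < p.2.1 ∧ 1/2 < p.2.2}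

lemma S_meas : MeasurableSet S := by
  unfold S Trybula
  apply MeasurableSet.inter
  · exact (measurableSet_Icc).preimage measurable_fst
  apply MeasurableSet.inter
  · exact (measurableSet_Icc).preimage (measurable_fst.comp measurable_snd)
  apply MeasurableSet.inter
  · exact (measurableSet_Icc).preimage (measurable_snd.comp measurable_snd)
  apply MeasurableSet.inter
  · apply MeasurableSet.inter
    · have h : Measurable fun p : ℝ × ℝ × ℝ => min (p.1 + p.2.1 * p.2.2) (min (p.2.1 + p.2.2 * p.1) (p.2.2 + p.1 * p.2.1)) := by fun_prop
      exact measurableSet_le h measurable_const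
    · have h : Measurable fun p : ℝ × ℝ × ℝ => min ((1 - p.1) + (1 - p.2.1) * (1 - p.2.2)) (min ((1 - p.2.1) + (1 - p.2.2) * (1 - p.1)) ((1 - p.2.2) + (1 - p.1) * (1 - p.2.1))) := by fun_prop
      exact measurableSet_le h measurable_const
  apply MeasurableSet.inter
  · exact measurableSet_lt measurable_const measurable_fst
  apply MeasurableSet.inter
  · exact measurableSet_lt measurable_const (measurable_fst.comp measurable_snd)
  · exact measurableSet_lt measurable_const (measurable_snd.comp measurable_snd)

lemma sect_in (x y : ℝ) (hx : x ∈ Ioc (1/2:ℝ) 1) (hy : y ∈ Ioc (1/2:ℝ) 1) :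
    {z : ℝ | (x, y, z) ∈ S} = Ioc (1/2) (min 1 (m3 x y)) := by
  obtain ⟨hx1, hx2⟩ := hx
  obtain ⟨hy1, hy2⟩ := hy
  have hx0 : (0:ℝ) < x := by linarith
  have hy0 : (0:ℝ) < y := by linarith
  ext z
  simp only [S, Trybula, mem_setOf_eq, mem_Icc, mem_Ioc, m3, le_min_iff, min_le_iff, le_max_iff]
  constructor
  · rintro ⟨_, _, ⟨h0, h1⟩, ⟨h2, _⟩, _, _, h3⟩
    refine ⟨h3, h1, ?_⟩
    rcases h2 with h | h | h
    · left; rw [le_div_iff₀ hy0]; linarith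
    · right; left; rw [le_div_iff₀ hx0]; linarith
    · right; right; nlinarith
  · rintro ⟨h3, h1, h⟩
    have hz0 : (0:ℝ) ≤ z := by linarith
    refine ⟨⟨le_of_lt hx0, hx2⟩, ⟨le_of_lt hy0, hy2⟩, ⟨hz0, h1⟩, ⟨?_, ?_⟩, by linarith, by linarith, h3⟩
    · rcases h with h | h | h
      · left; rw [le_div_iff₀ hy0] at h; linarith
      · right; left; rw [le_div_iff₀ hx0] at h; linarith
      · right; right; nlinarith
    · left; nlinarith


lemma jp_nonneg (x y : ℝ) : 0 ≤ jp x y := le_max_left _ _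
lemma jp_le (x y : ℝ) : jp x y ≤ 1/2 := by
  have := min_le_left (1:ℝ) (m3 x y)
  unfold jp; apply max_le <;> linarith

lemma jp_meas : Measurable fun p : ℝ × ℝ => jp p.1 p.2 := by
  unfold jp m3; fun_prop

lemma jp_intOn (x : ℝ) : IntegrableOn (fun y => jp x y) (Ioc (1/2:ℝ) 1) := by
  apply Integrable.mono' (g := fun _ => (1/2:ℝ))
  · exact integrableOn_const (by simp)
  · exact (jp_meas.comp (measurable_prodMk_left)).aestronglyMeasurable
  · filter_upwards with y
    rw [Real.norm_eq_abs, abs_of_nonneg (jp_nonneg x y)]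
    exact jp_le x y

noncomputable def J (x : ℝ) : ℝ := ∫ y in Ioc (1/2:ℝ) 1, jp x y

lemma J_nonneg (x : ℝ) : 0 ≤ J x := integral_nonneg fun y => jp_nonneg x y
lemma J_le (x : ℝ) : J x ≤ 1/2 := by
  have : J x ≤ ∫ _ in Ioc (1/2:ℝ) 1, (1/2:ℝ) := by
    apply integral_mono_of_nonneg
    · filter_upwards with y; exact jp_nonneg x y
    · exact integrableOn_const (by simp)
    · filter_upwards with y; exact jp_le x y
  simpa using this.trans (by simp [Real.volume_Ioc])

lemma J_intOn : IntegrableOn J (Ioc (1/2:ℝ) 1) := by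
  apply Integrable.mono' (g := fun _ => (1/2:ℝ))
  · exact integrableOn_const (by simp)
  · exact (jp_meas.stronglyMeasurable.integral_prod_right').aestronglyMeasurable.restrict
  · filter_upwards with x
    rw [Real.norm_eq_abs, abs_of_nonneg (J_nonneg x)]
    exact J_le x


lemma sect_out (x y : ℝ) (h : ¬(x ∈ Ioc (1/2:ℝ) 1 ∧ y ∈ Ioc (1/2:ℝ) 1)) :
    {z : ℝ | (x, y, z) ∈ S} = ∅ := by
  ext z
  simp only [S, mem_setOf_eq, mem_Icc, mem_empty_iff_false, iff_false]
  rintro ⟨⟨_, hx2⟩, ⟨_, hy2⟩, _, _, hx1, hy1, _⟩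
  exact h ⟨⟨hx1, hx2⟩, ⟨hy1, hy2⟩⟩

lemma volS : volume S = ENNReal.ofReal (∫ x in Ioc (1/2:ℝ) 1, J x) := by
  have h1 : volume S = ∫⁻ x, ∫⁻ y, volume {z : ℝ | (x, y, z) ∈ S} := by
    rw [MeasureTheory.Measure.volume_eq_prod, Measure.prod_apply S_meas]
    apply lintegral_congr
    intro x
    rw [MeasureTheory.Measure.volume_eq_prod,
      Measure.prod_apply (S_meas.preimage measurable_prodMk_left)]
    rfl
  rw [h1]
  have key : ∀ x, (∫⁻ y, volume {z : ℝ | (x, y, z) ∈ S})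
      = (Ioc (1/2:ℝ) 1).indicator (fun x => ENNReal.ofReal (J x)) x := by
    intro x
    by_cases hx : x ∈ Ioc (1/2:ℝ) 1
    · have h2 : ∀ y, volume {z : ℝ | (x, y, z) ∈ S}
          = (Ioc (1/2:ℝ) 1).indicator (fun y => ENNReal.ofReal (jp x y)) y := by
        intro y
        by_cases hy : y ∈ Ioc (1/2:ℝ) 1
        · rw [indicator_of_mem hy, sect_in x y hx hy, Real.volume_Ioc]
          rcases le_total (min 1 (m3 x y) - 1/2) 0 with h | h
          · rw [ENNReal.ofReal_eq_zero.2 h, jp, max_eq_left h, ENNReal.ofReal_zero]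
          · rw [jp, max_eq_right h]
        · rw [indicator_of_notMem hy, sect_out x y (fun hc => hy hc.2), measure_empty]
      rw [lintegral_congr h2, lintegral_indicator measurableSet_Ioc _,
        indicator_of_mem hx]
      rw [← ofReal_integral_eq_lintegral_ofReal (jp_intOn x)
        (Filter.Eventually.of_forall fun y => jp_nonneg x y)]
      rfl
    · rw [indicator_of_notMem hx]
      have h2 : ∀ y, volume {z : ℝ | (x, y, z) ∈ S} = 0 := fun y => by
        rw [sect_out x y (fun hc => hx hc.1), measure_empty]
      rw [lintegral_congr h2, lintegral_zero]
  rw [lintegral_congr key, lintegral_indicator measurableSet_Ioc _,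
    ← ofReal_integral_eq_lintegral_ofReal J_intOn
      (Filter.Eventually.of_forall J_nonneg)]

end ProbNT

open ProbNT Set in
theorem prob_nontransitive_triple :
    volume {p : ℝ × ℝ × ℝ |
        p.1 ∈ Set.Icc (0:ℝ) 1 ∧ p.2.1 ∈ Set.Icc (0:ℝ) 1 ∧ p.2.2 ∈ Set.Icc (0:ℝ) 1 ∧
        Trybula p.1 p.2.1 p.2.2 ∧ 1/2 < p.1 ∧ 1/2 < p.2.1 ∧ 1/2 < p.2.2}
      = ENNReal.ofReal
          (11 * Real.sqrt 5 / 8 - 43/16 - 3 * Real.log (Real.sqrt 5 - 1) + 3 * Real.log 2 / 8) := by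
  have hset : {p : ℝ × ℝ × ℝ |
        p.1 ∈ Set.Icc (0:ℝ) 1 ∧ p.2.1 ∈ Set.Icc (0:ℝ) 1 ∧ p.2.2 ∈ Set.Icc (0:ℝ) 1 ∧
        Trybula p.1 p.2.1 p.2.2 ∧ 1/2 < p.1 ∧ 1/2 < p.2.1 ∧ 1/2 < p.2.2} = S := rfl
  rw [hset, volS]
  congr 1
  have hJJ : ∀ x, J x = J' x :=
    fun x => (intervalIntegral.integral_of_le (by norm_num : (1/2:ℝ) ≤ 1)).symm
  calc (∫ x in Ioc (1/2:ℝ) 1, J x) = ∫ x in Ioc (1/2:ℝ) 1, J' x := by simp only [hJJ]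
    _ = F1 g0 - F1 (1/2) + (F2 1 - F2 g0) := outer
    _ = 11 * Real.sqrt 5 / 8 - 43/16 - 3 * Real.log (Real.sqrt 5 - 1) + 3 * Real.log 2 / 8 :=
        final_val
end

section
/- The probability that a uniformly random triple (x,y,z) ∈ [0,1]^3 is cyclic (i.e., satisfies Trybula's two 'min' inequalities) equals (11√5 − 17)/4 − 6 ln(√5 − 1). -/
open MeasureTheory

open Set

noncomputable def phR : ℝ := (Real.sqrt 5 - 1) / 2

lemma s5_sq : Real.sqrt 5 ^ 2 = 5 := Real.sq_sqrt (by norm_num)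
lemma s5_gt : 2.23 < Real.sqrt 5 := by nlinarith [s5_sq, Real.sqrt_nonneg 5]
lemma s5_lt : Real.sqrt 5 < 2.25 := by nlinarith [s5_sq, Real.sqrt_nonneg 5]
lemma ph_pos : 0 < phR := by unfold phR; nlinarith [s5_gt]
lemma ph_gt : 1/2 < phR := by unfold phR; nlinarith [s5_gt]
lemma ph_lt : phR < 1 := by unfold phR; nlinarith [s5_lt]
lemma ph_sq : phR^2 = 1 - phR := by unfold phR; nlinarith [s5_sq]

noncomputable def g2 : ℝ × ℝ → ℝ :=
  fun q => max (min (q.1*q.2) (min ((q.1+q.2-1)/q.2) ((q.1+q.2-1)/q.1))) 0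

noncomputable def FF : ℝ → ℝ := fun y =>
  if y ≤ 1/2 then y + (1-y)*Real.log (1-y)
  else if y ≤ phR then y - 2 + 1/y + (y-1)*Real.log (1-y) + 2*(1-y)*Real.log y
  else y^2/(1+y)

def cube : Set (ℝ×ℝ×ℝ) := {p | p.1 ∈ Icc (0:ℝ) 1 ∧ p.2.1 ∈ Icc (0:ℝ) 1 ∧ p.2.2 ∈ Icc (0:ℝ) 1}

def AA : Set (ℝ×ℝ×ℝ) := {p | p ∈ cube ∧ 1 < p.1 + p.2.1*p.2.2 ∧ 1 < p.2.1 + p.2.2*p.1 ∧ 1 < p.2.2 + p.1*p.2.1}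

def AA' : Set (ℝ×ℝ×ℝ) := {p | p ∈ cube ∧ 1 < (1-p.1) + (1-p.2.1)*(1-p.2.2) ∧ 1 < (1-p.2.1) + (1-p.2.2)*(1-p.1) ∧ 1 < (1-p.2.2) + (1-p.1)*(1-p.2.1)}

def TT : Set (ℝ×ℝ×ℝ) := {p | p.1 ∈ Icc (0:ℝ) 1 ∧ p.2.1 ∈ Icc (0:ℝ) 1 ∧ p.2.2 ∈ Icc (0:ℝ) 1 ∧
  (min (p.1 + p.2.1 * p.2.2) (min (p.2.1 + p.2.2 * p.1) (p.2.2 + p.1 * p.2.1)) ≤ 1 ∧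
  min ((1 - p.1) + (1 - p.2.1) * (1 - p.2.2))
    (min ((1 - p.2.1) + (1 - p.2.2) * (1 - p.1)) ((1 - p.2.2) + (1 - p.1) * (1 - p.2.1))) ≤ 1)}

lemma meas_cube : MeasurableSet cube :=
  measurableSet_Icc.prod (measurableSet_Icc.prod measurableSet_Icc)

lemma c_xyz : Continuous fun p : ℝ×ℝ×ℝ => p.1 + p.2.1*p.2.2 := by fun_prop
lemma c_yzx : Continuous fun p : ℝ×ℝ×ℝ => p.2.1 + p.2.2*p.1 := by fun_prop
lemma c_zxy : Continuous fun p : ℝ×ℝ×ℝ => p.2.2 + p.1*p.2.1 := by fun_prop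
lemma c_xyz' : Continuous fun p : ℝ×ℝ×ℝ => (1-p.1) + (1-p.2.1)*(1-p.2.2) := by fun_prop
lemma c_yzx' : Continuous fun p : ℝ×ℝ×ℝ => (1-p.2.1) + (1-p.2.2)*(1-p.1) := by fun_prop
lemma c_zxy' : Continuous fun p : ℝ×ℝ×ℝ => (1-p.2.2) + (1-p.1)*(1-p.2.1) := by fun_prop

lemma meas_AA : MeasurableSet AA :=
  meas_cube.inter ((measurableSet_lt measurable_const c_xyz.measurable).inter
    ((measurableSet_lt measurable_const c_yzx.measurable).inter
      (measurableSet_lt measurable_const c_zxy.measurable)))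

lemma meas_AA' : MeasurableSet AA' :=
  meas_cube.inter ((measurableSet_lt measurable_const c_xyz'.measurable).inter
    ((measurableSet_lt measurable_const c_yzx'.measurable).inter
      (measurableSet_lt measurable_const c_zxy'.measurable)))

lemma meas_TT : MeasurableSet TT := by
  have h : TT = cube ∩
      ({p : ℝ×ℝ×ℝ | min (p.1 + p.2.1 * p.2.2) (min (p.2.1 + p.2.2 * p.1) (p.2.2 + p.1 * p.2.1)) ≤ 1} ∩
       {p : ℝ×ℝ×ℝ | min ((1 - p.1) + (1 - p.2.1) * (1 - p.2.2))
          (min ((1 - p.2.1) + (1 - p.2.2) * (1 - p.1)) ((1 - p.2.2) + (1 - p.1) * (1 - p.2.1))) ≤ 1}) := by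
    ext p; simp only [TT, cube, Set.mem_setOf_eq, Set.mem_inter_iff]; tauto
  rw [h]
  exact meas_cube.inter ((measurableSet_le (c_xyz.min (c_yzx.min c_zxy)).measurable measurable_const).inter
    (measurableSet_le (c_xyz'.min (c_yzx'.min c_zxy')).measurable measurable_const))

lemma union_eq : TT ∪ (AA ∪ AA') = cube := by
  ext p
  simp only [TT, AA, AA', cube, Set.mem_union, Set.mem_setOf_eq]
  constructor
  · rintro (⟨h1,h2,h3,_⟩ | ⟨h,_⟩ | ⟨h,_⟩) <;> first | exact ⟨h1,h2,h3⟩ | exact h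
  · rintro ⟨h1,h2,h3⟩
    by_cases ha : min (p.1 + p.2.1 * p.2.2) (min (p.2.1 + p.2.2 * p.1) (p.2.2 + p.1 * p.2.1)) ≤ 1
    · by_cases hb : min ((1 - p.1) + (1 - p.2.1) * (1 - p.2.2))
          (min ((1 - p.2.1) + (1 - p.2.2) * (1 - p.1)) ((1 - p.2.2) + (1 - p.1) * (1 - p.2.1))) ≤ 1
      · exact Or.inl ⟨h1,h2,h3,ha,hb⟩
      · push_neg at hb
        rw [lt_min_iff, lt_min_iff] at hb
        exact Or.inr (Or.inr ⟨⟨h1,h2,h3⟩, hb.1, hb.2.1, hb.2.2⟩)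
    · push_neg at ha
      rw [lt_min_iff, lt_min_iff] at ha
      exact Or.inr (Or.inl ⟨⟨h1,h2,h3⟩, ha.1, ha.2.1, ha.2.2⟩)

lemma disj_AA : Disjoint AA AA' := by
  rw [Set.disjoint_left]
  rintro p ⟨⟨⟨hx0,hx1⟩,⟨hy0,hy1⟩,⟨hz0,hz1⟩⟩, h1, _, _⟩ ⟨_, g1, _, _⟩
  nlinarith [mul_nonneg (sub_nonneg.2 hy1) hz0, mul_nonneg (sub_nonneg.2 hz1) hy0]

lemma disj_T : Disjoint TT (AA ∪ AA') := by
  rw [Set.disjoint_left]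
  rintro p ⟨_,_,_,ha,hb⟩ (⟨_, h1, h2, h3⟩ | ⟨_, h1, h2, h3⟩)
  · exact absurd ha (not_le.2 (lt_min h1 (lt_min h2 h3)))
  · exact absurd hb (not_le.2 (lt_min h1 (lt_min h2 h3)))

lemma vol_cube : volume cube = 1 := by
  have : cube = (Icc (0:ℝ) 1) ×ˢ ((Icc (0:ℝ) 1) ×ˢ (Icc (0:ℝ) 1)) := rfl
  rw [this, Measure.volume_eq_prod, Measure.prod_prod, Measure.volume_eq_prod, Measure.prod_prod,
    Real.volume_Icc]
  norm_num

lemma ofReal_max0 (t : ℝ) : ENNReal.ofReal t = ENNReal.ofReal (max t 0) := by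
  rcases le_total t 0 with h|h
  · rw [ENNReal.ofReal_of_nonpos h, max_eq_right h, ENNReal.ofReal_zero]
  · rw [max_eq_left h]

lemma one_sub_max (a b c : ℝ) : 1 - max a (max b c) = min (1-a) (min (1-b) (1-c)) := by
  simp only [min_def, max_def]
  split_ifs <;> linarith

lemma sec_vol_s9 (q : ℝ × ℝ) :
    volume ((fun x => (x, q)) ⁻¹' AA) =
      (Ioc (0:ℝ) 1 ×ˢ Ioc (0:ℝ) 1).indicator (fun q => ENNReal.ofReal (g2 q)) q := by
  by_cases hq : q ∈ Ioc (0:ℝ) 1 ×ˢ Ioc (0:ℝ) 1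
  · obtain ⟨⟨hy0, hy1⟩, hz0, hz1⟩ := hq
    have hsec : (fun x => (x, q)) ⁻¹' AA =
        Ioc (max (1 - q.1*q.2) (max ((1-q.1)/q.2) ((1-q.2)/q.1))) 1 := by
      ext x
      simp only [AA, cube, Set.mem_preimage, Set.mem_setOf_eq, Set.mem_Ioc, Set.mem_Icc]
      constructor
      · rintro ⟨⟨⟨hx0,hx1⟩,_,_⟩, h1, h2, h3⟩
        refine ⟨max_lt (by linarith) (max_lt ?_ ?_), hx1⟩
        · rw [div_lt_iff₀ hz0]; nlinarith
        · rw [div_lt_iff₀ hy0]; nlinarith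
      · rintro ⟨hM, hx1⟩
        rw [max_lt_iff, max_lt_iff, div_lt_iff₀ hz0, div_lt_iff₀ hy0] at hM
        obtain ⟨m1, m2, m3⟩ := hM
        have hx0 : 0 ≤ x := by nlinarith
        exact ⟨⟨⟨hx0, hx1⟩, ⟨hy0.le, hy1⟩, ⟨hz0.le, hz1⟩⟩, by nlinarith, by nlinarith, by nlinarith⟩
    rw [hsec, Real.volume_Ioc, Set.indicator_of_mem (by exact ⟨⟨hy0,hy1⟩,hz0,hz1⟩)]
    rw [one_sub_max]
    have e1 : (1:ℝ) - (1 - q.1*q.2) = q.1*q.2 := by ring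
    have e2 : (1:ℝ) - (1-q.1)/q.2 = (q.1+q.2-1)/q.2 := by field_simp; ring
    have e3 : (1:ℝ) - (1-q.2)/q.1 = (q.1+q.2-1)/q.1 := by field_simp; ring
    rw [e1, e2, e3, g2, ← ofReal_max0]
  · have hsec : (fun x => (x, q)) ⁻¹' AA = ∅ := by
      ext x
      simp only [AA, cube, Set.mem_preimage, Set.mem_setOf_eq, Set.mem_empty_iff_false, iff_false,
        Set.mem_Icc, not_and]
      rintro ⟨⟨hx0,hx1⟩,⟨hy0,hy1⟩,⟨hz0,hz1⟩⟩ h1 h2 h3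
      exact hq ⟨⟨by nlinarith, hy1⟩, ⟨by nlinarith, hz1⟩⟩
    rw [hsec, Set.indicator_of_notMem hq]
    simp

lemma step1 : volume AA = ∫⁻ q in Ioc (0:ℝ) 1 ×ˢ Ioc (0:ℝ) 1, ENNReal.ofReal (g2 q) := by
  rw [Measure.volume_eq_prod, Measure.prod_apply_symm meas_AA]
  rw [← lintegral_indicator (measurableSet_Ioc.prod measurableSet_Ioc)]
  exact lintegral_congr sec_vol_s9
lemma g2_meas : Measurable g2 := by unfold g2; fun_prop
lemma g2_nonneg (q : ℝ × ℝ) : 0 ≤ g2 q := le_max_right _ _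
lemma g2_le_one {q : ℝ × ℝ} (h1 : q.1 ≤ 1) (h2 : q.2 ≤ 1) (h0' : 0 ≤ q.2) :
    g2 q ≤ 1 := by
  unfold g2
  refine max_le (le_trans (min_le_left _ _) (by nlinarith)) zero_le_one

lemma vol_sq : volume (Ioc (0:ℝ) 1 ×ˢ Ioc (0:ℝ) 1) = 1 := by
  rw [Measure.volume_eq_prod, Measure.prod_prod, Real.volume_Ioc]
  norm_num

lemma step2 : IntegrableOn g2 (Ioc (0:ℝ) 1 ×ˢ Ioc (0:ℝ) 1) volume := by
  apply Measure.integrableOn_of_bounded (M := 1)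
  · rw [vol_sq]; exact ENNReal.one_ne_top
  · exact g2_meas.aestronglyMeasurable
  · rw [ae_restrict_iff' (measurableSet_Ioc.prod measurableSet_Ioc)]
    refine ae_of_all _ fun q hq => ?_
    obtain ⟨⟨hy0,hy1⟩,hz0,hz1⟩ := hq
    rw [Real.norm_eq_abs, abs_of_nonneg (g2_nonneg q)]
    exact g2_le_one hy1 hz1 hz0.le

lemma step4 : ∫ q in Ioc (0:ℝ) 1 ×ˢ Ioc (0:ℝ) 1, g2 q =
    ∫ y in Ioc (0:ℝ) 1, ∫ z in Ioc (0:ℝ) 1, g2 (y, z) := by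
  have h := step2
  rw [Measure.volume_eq_prod] at h ⊢
  exact setIntegral_prod g2 h

lemma pieceCongr {f g : ℝ → ℝ} {a b : ℝ} (hab : a ≤ b) (h : EqOn f g (Ioc a b)) :
    ∫ z in a..b, f z = ∫ z in a..b, g z := by
  rw [intervalIntegral.integral_of_le hab, intervalIntegral.integral_of_le hab]
  exact setIntegral_congr_fun measurableSet_Ioc h

lemma int_lin (c d a b : ℝ) : ∫ z in a..b, (c*z + d) = c*(b^2-a^2)/2 + d*(b-a) := by
  have h1 : IntervalIntegrable (fun z : ℝ => c*z) volume a b :=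
    (continuous_const.mul continuous_id).intervalIntegrable a b
  rw [intervalIntegral.integral_add h1 intervalIntegrable_const,
    intervalIntegral.integral_const_mul, integral_id, intervalIntegral.integral_const,
    smul_eq_mul]
  ring

lemma int_div (y a b : ℝ) (ha : 0 < a) (hab : a ≤ b) :
    ∫ z in a..b, (y + z - 1)/z = (b - a) + (y-1)*(Real.log b - Real.log a) := by
  have hb : 0 < b := lt_of_lt_of_le ha hab
  have hne : ∀ z ∈ Icc a b, z ≠ 0 := fun z hz => ne_of_gt (lt_of_lt_of_le ha hz.1)
  have hcong : EqOn (fun z : ℝ => (y + z - 1)/z) (fun z : ℝ => 1 + (y-1)*(1/z)) (Ioc a b) := by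
    intro z hz
    have hz0 : z ≠ 0 := ne_of_gt (lt_trans ha hz.1)
    field_simp
    ring
  rw [pieceCongr hab hcong]
  have h2 : IntervalIntegrable (fun z : ℝ => (y-1)*(1/z)) volume a b := by
    apply ContinuousOn.intervalIntegrable
    rw [uIcc_of_le hab]
    exact continuousOn_const.mul (continuousOn_const.div continuousOn_id hne)
  rw [intervalIntegral.integral_add intervalIntegrable_const h2,
    intervalIntegral.integral_const_mul,
    integral_one_div (by rw [uIcc_of_le hab, mem_Icc]; rintro ⟨h1, _⟩; linarith),
    intervalIntegral.integral_const, Real.log_div (ne_of_gt hb) (ne_of_gt ha), smul_eq_mul]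
  ring

lemma int_mul (c a b : ℝ) : ∫ z in a..b, c*z = c*(b^2-a^2)/2 := by
  rw [intervalIntegral.integral_const_mul, integral_id]; ring

lemma Gii {y : ℝ} (hy0 : 0 ≤ y) (hy1 : y ≤ 1) {a b : ℝ} (h0 : 0 ≤ a) (hab : a ≤ b) (hb1 : b ≤ 1) :
    IntervalIntegrable (fun z => g2 (y, z)) volume a b := by
  rw [intervalIntegrable_iff_integrableOn_Ioc_of_le hab]
  apply Measure.integrableOn_of_bounded (M := 1)
  · rw [Real.volume_Ioc]; exact ENNReal.ofReal_ne_top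
  · exact (g2_meas.comp (measurable_const.prodMk measurable_id)).aestronglyMeasurable
  · rw [ae_restrict_iff' measurableSet_Ioc]
    refine ae_of_all _ fun z hz => ?_
    rw [Real.norm_eq_abs, abs_of_nonneg (g2_nonneg _)]
    exact g2_le_one hy1 (le_trans hz.2 hb1) (le_trans h0 hz.1.le)

lemma piece_zero {y : ℝ} : EqOn (fun z => g2 (y, z)) (fun _ => (0:ℝ)) (Ioc 0 (1-y)) := by
  intro z hz
  have hz0 : (0:ℝ) < z := hz.1
  have : (y+z-1)/z ≤ 0 :=
    div_nonpos_of_nonpos_of_nonneg (by linarith [hz.2]) hz0.le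
  exact max_eq_right (le_trans (le_trans (min_le_right _ _) (min_le_left _ _)) this)

lemma innerA {y : ℝ} (hy0 : 0 < y) (hy : y ≤ 1/2) :
    ∫ z in (0:ℝ)..1, g2 (y, z) = y + (1-y)*Real.log (1-y) := by
  have h1y : (0:ℝ) < 1 - y := by linarith
  have hsplit := intervalIntegral.integral_add_adjacent_intervals
    (Gii (a := 0) (b := 1-y) hy0.le (by linarith) le_rfl (by linarith) (by linarith))
    (Gii (a := 1-y) (b := 1) hy0.le (by linarith) (by linarith) (by linarith) le_rfl)
  rw [← hsplit, pieceCongr (by linarith) piece_zero]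
  have hp2 : EqOn (fun z => g2 (y, z)) (fun z : ℝ => (y + z - 1)/z) (Ioc (1-y) 1) := by
    intro z hz
    have hz0 : (0:ℝ) < z := lt_trans h1y hz.1
    have hnum : 0 ≤ y + z - 1 := by linarith [hz.1]
    have hbc : (y+z-1)/z ≤ (y+z-1)/y := by
      rw [div_le_div_iff₀ hz0 hy0]
      nlinarith [hz.1]
    have hba : (y+z-1)/z ≤ y*z := by
      rw [div_le_iff₀ hz0]
      nlinarith [mul_nonneg (sub_nonneg.2 hz.2) (show (0:ℝ) ≤ 1 - y - y*z by nlinarith [hz.2])]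
    show max (min (y*z) (min ((y+z-1)/z) ((y+z-1)/y))) 0 = (y+z-1)/z
    rw [min_eq_left hbc, min_eq_right hba]
    exact max_eq_left (div_nonneg hnum hz0.le)
  rw [pieceCongr (by linarith) hp2, int_div y (1-y) 1 h1y (by linarith)]
  simp [Real.log_one]
  ring

set_option maxHeartbeats 1000000 in
lemma innerB {y : ℝ} (hy : 1/2 < y) (hyp : y ≤ phR) :
    ∫ z in (0:ℝ)..1, g2 (y, z) =
      y - 2 + 1/y + (y-1)*Real.log (1-y) + 2*(1-y)*Real.log y := by
  have hy0 : (0:ℝ) < y := by linarith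
  have hy1 : y < 1 := lt_of_le_of_lt hyp ph_lt
  have h1y : (0:ℝ) < 1 - y := by linarith
  have hyy : y^2 ≤ 1 - y := by nlinarith [ph_sq, ph_pos]
  have hyt2 : y ≤ (1-y)/y := by rw [le_div_iff₀ hy0]; nlinarith
  have ht21 : (1-y)/y ≤ 1 := by rw [div_le_one hy0]; linarith
  have ht20 : 0 < (1-y)/y := div_pos h1y hy0
  have hs1 := intervalIntegral.integral_add_adjacent_intervals
    (Gii (a := 0) (b := 1-y) hy0.le hy1.le le_rfl (by linarith) (by linarith))
    (Gii (a := 1-y) (b := y) hy0.le hy1.le (by linarith) (by linarith) (by linarith))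
  have hs2 := intervalIntegral.integral_add_adjacent_intervals
    (Gii (a := 0) (b := y) hy0.le hy1.le le_rfl hy0.le hy1.le)
    (Gii (a := y) (b := (1-y)/y) hy0.le hy1.le hy0.le hyt2 ht21)
  have hs3 := intervalIntegral.integral_add_adjacent_intervals
    (Gii (a := 0) (b := (1-y)/y) hy0.le hy1.le le_rfl ht20.le ht21)
    (Gii (a := (1-y)/y) (b := 1) hy0.le hy1.le ht20.le ht21 le_rfl)
  rw [← hs3, ← hs2, ← hs1]
  -- pieces
  rw [pieceCongr (by linarith : (0:ℝ) ≤ 1-y) piece_zero]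
  have hp2 : EqOn (fun z => g2 (y, z)) (fun z : ℝ => (1/y)*z + (y-1)/y) (Ioc (1-y) y) := by
    intro z hz
    have hz0 : (0:ℝ) < z := lt_trans h1y hz.1
    have hnum : 0 ≤ y + z - 1 := by linarith [hz.1]
    have hcb : (y+z-1)/y ≤ (y+z-1)/z := by
      rw [div_le_div_iff₀ hy0 hz0]
      nlinarith [hz.2]
    have hca : (y+z-1)/y ≤ y*z := by
      rw [div_le_iff₀ hy0]
      nlinarith [mul_nonneg h1y.le (show (0:ℝ) ≤ 1 - z - z*y by nlinarith [hz.2])]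
    show max (min (y*z) (min ((y+z-1)/z) ((y+z-1)/y))) 0 = (1/y)*z + (y-1)/y
    rw [min_eq_right hcb, min_eq_right hca]
    rw [max_eq_left (div_nonneg hnum hy0.le)]
    field_simp
    ring
  have hp3 : EqOn (fun z => g2 (y, z)) (fun z : ℝ => (y + z - 1)/z) (Ioc y ((1-y)/y)) := by
    intro z hz
    have hz0 : (0:ℝ) < z := lt_trans hy0 hz.1
    have hnum : 0 ≤ y + z - 1 := by nlinarith [hz.1]
    have hzy : y*z ≤ 1 - y := by
      have := hz.2
      rw [le_div_iff₀ hy0] at this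
      nlinarith
    have hbc : (y+z-1)/z ≤ (y+z-1)/y := by
      rw [div_le_div_iff₀ hz0 hy0]
      nlinarith [hz.1]
    have hba : (y+z-1)/z ≤ y*z := by
      rw [div_le_iff₀ hz0]
      nlinarith [mul_nonneg (sub_nonneg.2 (le_trans hz.2 ht21)) (show (0:ℝ) ≤ 1 - y - y*z by nlinarith)]
    show max (min (y*z) (min ((y+z-1)/z) ((y+z-1)/y))) 0 = (y+z-1)/z
    rw [min_eq_left hbc, min_eq_right hba]
    exact max_eq_left (div_nonneg hnum hz0.le)
  have hp4 : EqOn (fun z => g2 (y, z)) (fun z : ℝ => y*z) (Ioc ((1-y)/y) 1) := by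
    intro z hz
    have hz0 : (0:ℝ) < z := lt_trans ht20 hz.1
    have hzy : 1 - y ≤ y*z := by
      have := hz.1
      rw [div_lt_iff₀ hy0] at this
      nlinarith
    have hab : y*z ≤ (y+z-1)/z := by
      rw [le_div_iff₀ hz0]
      nlinarith [mul_nonneg (sub_nonneg.2 hz.2) (show (0:ℝ) ≤ y + y*z - 1 by nlinarith)]
    have hac : y*z ≤ (y+z-1)/y := by
      rw [le_div_iff₀ hy0]
      have hzy2 : y ≤ z := le_trans hyt2 hz.1.le
      nlinarith [mul_nonneg h1y.le (show (0:ℝ) ≤ z + z*y - 1 by nlinarith)]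
    show max (min (y*z) (min ((y+z-1)/z) ((y+z-1)/y))) 0 = y*z
    rw [min_eq_left (le_min hab hac)]
    exact max_eq_left (mul_nonneg hy0.le hz0.le)
  rw [pieceCongr (by linarith : 1-y ≤ y) hp2, pieceCongr hyt2 hp3, pieceCongr ht21 hp4,
    intervalIntegral.integral_zero, int_lin, int_div y y ((1-y)/y) hy0 hyt2, int_mul,
    Real.log_div (ne_of_gt h1y) (ne_of_gt hy0)]
  generalize Real.log (1-y) = L1
  generalize Real.log y = L2
  field_simp
  ring

set_option maxHeartbeats 1000000 in
lemma innerC {y : ℝ} (hyp : phR < y) (hy1 : y ≤ 1) :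
    ∫ z in (0:ℝ)..1, g2 (y, z) = y^2/(1+y) := by
  have hy0 : (0:ℝ) < y := lt_trans ph_pos hyp
  have h1y : (0:ℝ) ≤ 1 - y := by linarith
  have h1py : (0:ℝ) < 1 + y := by linarith
  have hyy : 1 ≤ y^2 + y := by nlinarith [ph_sq, ph_pos]
  have ht1a : 1 - y ≤ 1/(1+y) := by rw [le_div_iff₀ h1py]; nlinarith
  have ht1b : 1/(1+y) ≤ 1 := by rw [div_le_one h1py]; linarith
  have ht1y : 1/(1+y) ≤ y := by rw [div_le_iff₀ h1py]; nlinarith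
  have ht10 : 0 < 1/(1+y) := by positivity
  have hs1 := intervalIntegral.integral_add_adjacent_intervals
    (Gii (a := 0) (b := 1-y) hy0.le hy1 le_rfl h1y (by linarith))
    (Gii (a := 1-y) (b := 1/(1+y)) hy0.le hy1 h1y ht1a ht1b)
  have hs2 := intervalIntegral.integral_add_adjacent_intervals
    (Gii (a := 0) (b := 1/(1+y)) hy0.le hy1 le_rfl ht10.le ht1b)
    (Gii (a := 1/(1+y)) (b := 1) hy0.le hy1 ht10.le ht1b le_rfl)
  rw [← hs2, ← hs1, pieceCongr h1y piece_zero]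
  have hp2 : EqOn (fun z => g2 (y, z)) (fun z : ℝ => (1/y)*z + (y-1)/y) (Ioc (1-y) (1/(1+y))) := by
    intro z hz
    have hz0 : (0:ℝ) < z := lt_of_le_of_lt (by linarith) hz.1
    have hnum : 0 ≤ y + z - 1 := by linarith [hz.1]
    have hz1py : z*(1+y) ≤ 1 := by
      have := hz.2
      rw [le_div_iff₀ h1py] at this
      linarith
    have hzy : z ≤ y := le_trans hz.2 ht1y
    have hcb : (y+z-1)/y ≤ (y+z-1)/z := by
      rw [div_le_div_iff₀ hy0 hz0]
      nlinarith
    have hca : (y+z-1)/y ≤ y*z := by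
      rw [div_le_iff₀ hy0]
      nlinarith [mul_nonneg h1y (show (0:ℝ) ≤ 1 - z*(1+y) by linarith)]
    show max (min (y*z) (min ((y+z-1)/z) ((y+z-1)/y))) 0 = (1/y)*z + (y-1)/y
    rw [min_eq_right hcb, min_eq_right hca, max_eq_left (div_nonneg hnum hy0.le)]
    field_simp
    ring
  have hp3 : EqOn (fun z => g2 (y, z)) (fun z : ℝ => y*z) (Ioc (1/(1+y)) 1) := by
    intro z hz
    have hz0 : (0:ℝ) < z := lt_trans ht10 hz.1
    have hz1py : 1 ≤ z*(1+y) := by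
      have := hz.1.le
      rw [div_le_iff₀ h1py] at this
      linarith
    have hy1z : 1 ≤ y*(1+z) := by nlinarith [hz.1.le]
    have hab : y*z ≤ (y+z-1)/z := by
      rw [le_div_iff₀ hz0]
      nlinarith [mul_nonneg (sub_nonneg.2 hz.2) (show (0:ℝ) ≤ y*(1+z) - 1 by linarith)]
    have hac : y*z ≤ (y+z-1)/y := by
      rw [le_div_iff₀ hy0]
      nlinarith [mul_nonneg h1y (show (0:ℝ) ≤ z*(1+y) - 1 by linarith)]
    show max (min (y*z) (min ((y+z-1)/z) ((y+z-1)/y))) 0 = y*z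
    rw [min_eq_left (le_min hab hac)]
    exact max_eq_left (mul_nonneg hy0.le hz0.le)
  rw [pieceCongr ht1a hp2, pieceCongr ht1b hp3, intervalIntegral.integral_zero, int_lin, int_mul]
  field_simp
  ring

lemma inner_eq : EqOn (fun y => ∫ z in Ioc (0:ℝ) 1, g2 (y, z)) FF (Ioc (0:ℝ) 1) := by
  intro y hy
  show ∫ z in Ioc (0:ℝ) 1, g2 (y, z) = FF y
  rw [show ∫ z in Ioc (0:ℝ) 1, g2 (y, z) = ∫ z in (0:ℝ)..1, g2 (y, z) from
    (intervalIntegral.integral_of_le zero_le_one).symm]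
  unfold FF
  split_ifs with h1 h2
  · exact innerA hy.1 h1
  · exact innerB (not_le.1 h1) h2
  · exact innerC (not_le.1 h2) hy.2

lemma hasDeriv_P1 {x : ℝ} (hx : x < 1) :
    HasDerivAt (fun y : ℝ => y^2/2 + (1-y)^2/4 - (1-y)^2/2 * Real.log (1-y))
      (x + (1-x)*Real.log (1-x)) x := by
  have h1x : (0:ℝ) < 1 - x := by linarith
  have h1 : HasDerivAt (fun y : ℝ => 1 - y) (-1) x := (hasDerivAt_id x).const_sub 1
  have hlog := h1.log (ne_of_gt h1x)
  have hsq := h1.pow 2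
  have hP := (((hasDerivAt_pow 2 x).div_const 2).add (hsq.div_const 4)).sub
    ((hsq.div_const 2).mul hlog)
  refine HasDerivAt.congr_deriv hP ?_
  simp only [Pi.pow_apply]
  field_simp
  ring

lemma hasDeriv_P2 {x : ℝ} (hx0 : 0 < x) (hx : x < 1) :
    HasDerivAt (fun y : ℝ => y^2 - 4*y + (1 + 2*y - y^2)*Real.log y
        + (1-y)^2/2 * Real.log (1-y) - (1-y)^2/4)
      (x - 2 + 1/x + (x-1)*Real.log (1-x) + 2*(1-x)*Real.log x) x := by
  have h1x : (0:ℝ) < 1 - x := by linarith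
  have h1 : HasDerivAt (fun y : ℝ => 1 - y) (-1) x := (hasDerivAt_id x).const_sub 1
  have hlog1 := h1.log (ne_of_gt h1x)
  have hlog2 := (hasDerivAt_id x).log (ne_of_gt hx0)
  have hsq := h1.pow 2
  have hpoly : HasDerivAt (fun y : ℝ => 1 + 2*y - y^2) (2 - 2*x) x := by
    have := ((hasDerivAt_id x).const_mul 2).const_add 1 |>.sub (hasDerivAt_pow 2 x)
    refine HasDerivAt.congr_deriv this ?_
    ring
  have hq : HasDerivAt (fun y : ℝ => y^2 - 4*y) (2*x - 4) x := by
    have := (hasDerivAt_pow 2 x).sub ((hasDerivAt_id x).const_mul 4)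
    refine HasDerivAt.congr_deriv this ?_
    ring
  have hP := (((hq.add (hpoly.mul hlog2)).add ((hsq.div_const 2).mul hlog1)).sub
    (hsq.div_const 4))
  refine HasDerivAt.congr_deriv hP ?_
  simp only [Pi.pow_apply, id]
  field_simp
  ring

lemma hasDeriv_P3 {x : ℝ} (hx : -1 < x) :
    HasDerivAt (fun y : ℝ => y^2/2 - y + Real.log (1+y)) (x^2/(1+x)) x := by
  have h1x : (0:ℝ) < 1 + x := by linarith
  have h1 : HasDerivAt (fun y : ℝ => 1 + y) 1 x := (hasDerivAt_id x).const_add 1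
  have hlog := h1.log (ne_of_gt h1x)
  have hP := (((hasDerivAt_pow 2 x).div_const 2).sub (hasDerivAt_id x)).add hlog
  refine HasDerivAt.congr_deriv hP ?_
  field_simp
  ring

lemma contA : ContinuousOn (fun y : ℝ => y + (1-y)*Real.log (1-y)) (Icc 0 (1/2)) := by
  apply continuousOn_id.add
  apply ContinuousOn.mul (by fun_prop)
  exact ContinuousOn.log (by fun_prop) (fun y hy => by
    have := hy.2; simp only [mem_Icc] at hy; intro h; linarith [hy.2])

lemma contB : ContinuousOn (fun y : ℝ => y - 2 + 1/y + (y-1)*Real.log (1-y) + 2*(1-y)*Real.log y)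
    (Icc (1/2) phR) := by
  have h1 : ∀ y ∈ Icc (1/2 : ℝ) phR, (1:ℝ) - y ≠ 0 := by
    intro y hy
    simp only [mem_Icc] at hy
    have := ph_lt
    intro h
    linarith [hy.2]
  have h2 : ∀ y ∈ Icc (1/2 : ℝ) phR, y ≠ 0 := by
    intro y hy
    simp only [mem_Icc] at hy
    intro h
    linarith [hy.1]
  refine ContinuousOn.add (ContinuousOn.add (ContinuousOn.add (by fun_prop)
    (continuousOn_const.div continuousOn_id h2)) ?_) ?_
  · exact ContinuousOn.mul (by fun_prop) (ContinuousOn.log (by fun_prop) h1)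
  · exact ContinuousOn.mul (by fun_prop) (ContinuousOn.log continuousOn_id h2)

lemma contC : ContinuousOn (fun y : ℝ => y^2/(1+y)) (Icc phR 1) := by
  apply ContinuousOn.div (by fun_prop) (by fun_prop)
  intro y hy
  simp only [mem_Icc] at hy
  have := ph_pos
  intro h
  linarith [hy.1]

lemma ffA : EqOn FF (fun y : ℝ => y + (1-y)*Real.log (1-y)) (Ioc 0 (1/2)) := by
  intro y hy
  simp only [FF, if_pos hy.2]

lemma ffB : EqOn FF (fun y : ℝ => y - 2 + 1/y + (y-1)*Real.log (1-y) + 2*(1-y)*Real.log y)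
    (Ioc (1/2) phR) := by
  intro y hy
  simp only [FF, if_neg (not_le.2 hy.1), if_pos hy.2]

lemma ffC : EqOn FF (fun y : ℝ => y^2/(1+y)) (Ioc phR 1) := by
  intro y hy
  have h1 := lt_trans ph_gt hy.1
  simp only [FF, if_neg (not_le.2 h1), if_neg (not_le.2 hy.1)]

lemma iiA : IntervalIntegrable FF volume 0 (1/2) := by
  rw [intervalIntegrable_iff_integrableOn_Ioc_of_le (by norm_num)]
  exact (integrableOn_congr_fun ffA measurableSet_Ioc).2
    (contA.integrableOn_Icc.mono_set Ioc_subset_Icc_self)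

lemma iiB : IntervalIntegrable FF volume (1/2) phR := by
  rw [intervalIntegrable_iff_integrableOn_Ioc_of_le ph_gt.le]
  exact (integrableOn_congr_fun ffB measurableSet_Ioc).2
    (contB.integrableOn_Icc.mono_set Ioc_subset_Icc_self)

lemma iiC : IntervalIntegrable FF volume phR 1 := by
  rw [intervalIntegrable_iff_integrableOn_Ioc_of_le ph_lt.le]
  exact (integrableOn_congr_fun ffC measurableSet_Ioc).2
    (contC.integrableOn_Icc.mono_set Ioc_subset_Icc_self)

lemma outerA : ∫ y in (0:ℝ)..(1/2), FF y = -1/16 + (1/8)*Real.log 2 := by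
  rw [pieceCongr (by norm_num) ffA]
  rw [intervalIntegral.integral_eq_sub_of_hasDerivAt
    (f := fun y : ℝ => y^2/2 + (1-y)^2/4 - (1-y)^2/2 * Real.log (1-y))
    (fun x hx => hasDeriv_P1 (by rw [uIcc_of_le (by norm_num)] at hx; linarith [hx.2]))
    ((contA.mono (by rw [uIcc_of_le (by norm_num)])).intervalIntegrable)]
  rw [show (1:ℝ) - 1/2 = 2⁻¹ by norm_num, show (1:ℝ) - 0 = 1 by norm_num,
    Real.log_inv, Real.log_one]
  norm_num
  ring

noncomputable def aval : ℝ := (21 - 11*Real.sqrt 5)/8 + 3*Real.log (Real.sqrt 5 - 1)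

lemma outerB : ∫ y in (1/2 : ℝ)..phR, FF y =
    37/16 - (17/4)*phR + 2*Real.log phR + (15/8)*Real.log 2 := by
  rw [pieceCongr ph_gt.le ffB]
  rw [intervalIntegral.integral_eq_sub_of_hasDerivAt
    (f := fun y : ℝ => y^2 - 4*y + (1 + 2*y - y^2)*Real.log y
      + (1-y)^2/2 * Real.log (1-y) - (1-y)^2/4)
    (fun x hx => by
      rw [uIcc_of_le ph_gt.le] at hx
      exact hasDeriv_P2 (by linarith [hx.1]) (by linarith [hx.2, ph_lt]))
    ((contB.mono (by rw [uIcc_of_le ph_gt.le])).intervalIntegrable)]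
  rw [show Real.log (1 - phR) = 2*Real.log phR by
      rw [← ph_sq, Real.log_pow]; norm_num,
    show (1:ℝ) - 1/2 = 2⁻¹ by norm_num, show (1:ℝ)/2 = 2⁻¹ by norm_num, Real.log_inv]
  linear_combination (3/4 : ℝ) * ph_sq

lemma outerC : ∫ y in phR..(1:ℝ), FF y = -1 + (3/2)*phR + Real.log phR + Real.log 2 := by
  rw [pieceCongr ph_lt.le ffC]
  rw [intervalIntegral.integral_eq_sub_of_hasDerivAt
    (f := fun y : ℝ => y^2/2 - y + Real.log (1+y))
    (fun x hx => by
      rw [uIcc_of_le ph_lt.le] at hx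
      exact hasDeriv_P3 (by linarith [hx.1, ph_pos]))
    ((contC.mono (by rw [uIcc_of_le ph_lt.le])).intervalIntegrable)]
  rw [show (1:ℝ) + 1 = 2 by norm_num,
    show (1:ℝ) + phR = phR⁻¹ by
      rw [inv_eq_one_div, eq_div_iff (ne_of_gt ph_pos)]; nlinarith [ph_sq],
    Real.log_inv]
  linear_combination (-(1/2) : ℝ) * ph_sq

lemma outer : ∫ y in Ioc (0:ℝ) 1, FF y = aval := by
  rw [← intervalIntegral.integral_of_le zero_le_one]
  have h2 := intervalIntegral.integral_add_adjacent_intervals (iiA.trans iiB) iiC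
  have h12 := intervalIntegral.integral_add_adjacent_intervals iiA iiB
  rw [← h2, ← h12, outerA, outerB, outerC]
  unfold aval
  rw [show Real.sqrt 5 - 1 = 2*phR from by unfold phR; ring,
    Real.log_mul two_ne_zero (ne_of_gt ph_pos),
    show Real.sqrt 5 = 2*phR + 1 from by unfold phR; ring]
  ring

lemma vol_AA'_eq : volume AA' = volume AA := by
  have h1 : MeasurePreserving (fun t : ℝ => 1 - t) volume volume :=
    Measure.measurePreserving_sub_left volume 1
  have h2 : MeasurePreserving (Prod.map (fun t : ℝ => 1 - t) (fun t : ℝ => 1 - t))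
      (volume : Measure (ℝ×ℝ)) volume := by
    rw [Measure.volume_eq_prod]; exact h1.prod h1
  have h3 : MeasurePreserving (Prod.map (fun t : ℝ => 1 - t)
      (Prod.map (fun t : ℝ => 1 - t) (fun t : ℝ => 1 - t))) (volume : Measure (ℝ×ℝ×ℝ)) volume := by
    rw [Measure.volume_eq_prod]; exact h1.prod h2
  have hpre : AA' = (Prod.map (fun t : ℝ => 1 - t)
      (Prod.map (fun t : ℝ => 1 - t) (fun t : ℝ => 1 - t))) ⁻¹' AA := by
    ext p
    simp only [AA, AA', cube, Set.mem_preimage, Set.mem_setOf_eq, Prod.map, Set.mem_Icc]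
    constructor
    · rintro ⟨⟨⟨a1,a2⟩,⟨b1,b2⟩,⟨c1,c2⟩⟩, h1, h2, h3⟩
      exact ⟨⟨⟨by linarith, by linarith⟩,⟨by linarith, by linarith⟩,⟨by linarith, by linarith⟩⟩, h1, h2, h3⟩
    · rintro ⟨⟨⟨a1,a2⟩,⟨b1,b2⟩,⟨c1,c2⟩⟩, h1, h2, h3⟩
      exact ⟨⟨⟨by linarith, by linarith⟩,⟨by linarith, by linarith⟩,⟨by linarith, by linarith⟩⟩, h1, h2, h3⟩
  rw [hpre]
  exact h3.measure_preimage meas_AA.nullMeasurableSet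

lemma vol_AA : volume AA = ENNReal.ofReal aval := by
  rw [step1, ← ofReal_integral_eq_lintegral_ofReal step2 (ae_of_all _ g2_nonneg), step4,
    setIntegral_congr_fun measurableSet_Ioc inner_eq, outer]

lemma aval_nonneg : 0 ≤ aval := by
  have hlog : 1 - (Real.sqrt 5 - 1)⁻¹ ≤ Real.log (Real.sqrt 5 - 1) :=
    Real.one_sub_inv_le_log_of_pos (by nlinarith [s5_gt])
  have h1 : (0:ℝ) < Real.sqrt 5 - 1 := by nlinarith [s5_gt]
  unfold aval
  have h2 : (1:ℝ) - (Real.sqrt 5 - 1)⁻¹ = (Real.sqrt 5 - 2)/(Real.sqrt 5 - 1) := by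
    field_simp; ring
  rw [h2] at hlog
  have h3 : (Real.sqrt 5 - 2)/(Real.sqrt 5 - 1) ≥ 0.18 := by
    rw [ge_iff_le, le_div_iff₀ h1]
    nlinarith [s5_gt, s5_lt]
  nlinarith [s5_lt]

lemma cval_nonneg : 0 ≤ (11 * Real.sqrt 5 - 17) / 4 - 6 * Real.log (Real.sqrt 5 - 1) := by
  have h1 : (0:ℝ) < Real.sqrt 5 - 1 := by nlinarith [s5_gt]
  have hlog : Real.log (Real.sqrt 5 - 1) ≤ Real.sqrt 5 - 2 :=
    le_trans (Real.log_le_sub_one_of_pos h1) (by linarith)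
  nlinarith [s5_gt, s5_lt, s5_sq]

lemma cval_key : (11 * Real.sqrt 5 - 17) / 4 - 6 * Real.log (Real.sqrt 5 - 1) + (aval + aval) = 1 := by
  unfold aval; ring


theorem prob_cyclic_triple :
    volume {p : ℝ × ℝ × ℝ |
        p.1 ∈ Set.Icc (0:ℝ) 1 ∧ p.2.1 ∈ Set.Icc (0:ℝ) 1 ∧ p.2.2 ∈ Set.Icc (0:ℝ) 1 ∧
        Trybula p.1 p.2.1 p.2.2}
      = ENNReal.ofReal ((11 * Real.sqrt 5 - 17) / 4 - 6 * Real.log (Real.sqrt 5 - 1)) := by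
  show volume TT = _
  have hU : volume TT + (volume AA + volume AA') = 1 := by
    rw [← measure_union disj_AA meas_AA', ← measure_union disj_T (meas_AA.union meas_AA'),
      union_eq, vol_cube]
  rw [vol_AA'_eq, vol_AA] at hU
  have hX : ENNReal.ofReal aval + ENNReal.ofReal aval ≠ ⊤ := by
    exact ENNReal.add_ne_top.2 ⟨ENNReal.ofReal_ne_top, ENNReal.ofReal_ne_top⟩
  have hC : ENNReal.ofReal ((11 * Real.sqrt 5 - 17) / 4 - 6 * Real.log (Real.sqrt 5 - 1))
      + (ENNReal.ofReal aval + ENNReal.ofReal aval) = 1 := by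
    rw [← ENNReal.ofReal_add aval_nonneg aval_nonneg, ← ENNReal.ofReal_add cval_nonneg
      (by linarith [aval_nonneg] : (0:ℝ) ≤ aval + aval), cval_key, ENNReal.ofReal_one]
  rw [← hC] at hU
  have h5 : (ENNReal.ofReal aval + ENNReal.ofReal aval) + volume TT =
      (ENNReal.ofReal aval + ENNReal.ofReal aval) +
        ENNReal.ofReal ((11 * Real.sqrt 5 - 17) / 4 - 6 * Real.log (Real.sqrt 5 - 1)) := by
    rw [add_comm (ENNReal.ofReal aval + ENNReal.ofReal aval) (volume TT),
      add_comm (ENNReal.ofReal aval + ENNReal.ofReal aval)]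
    exact hU
  exact (ENNReal.add_right_inj hX).mp h5
end

section
/- Let C_3 ⊆ [0,1]^3 be the set of cyclic triples, C_3^{(I)} = {(x,y,z) ∈ C_3 : 1/2 < x ≤ 1, x ≤ y, z ≤ 1}, and C_3^{(II)} = {(x,y,z) ∈ C_3 : 0 ≤ x < 1/2, 1/2 < y, z ≤ 1}. Then vol(C_3) = 6 vol(C_3^{(I)}) + 6 vol(C_3^{(II)}). -/
open MeasureTheory

/-! ### Auxiliary lemmas -/

lemma try_swap12 (x y z : ℝ) : Trybula y x z ↔ Trybula x y z := by
  simp only [Trybula, min_le_iff]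
  constructor <;> rintro ⟨h1, h2⟩ <;> constructor <;> ring_nf at * <;> tauto

lemma try_swap13 (x y z : ℝ) : Trybula z y x ↔ Trybula x y z := by
  simp only [Trybula, min_le_iff]
  constructor <;> rintro ⟨h1, h2⟩ <;> constructor <;> ring_nf at * <;> tauto

lemma try_flip (x y z : ℝ) : Trybula (1-x) (1-y) (1-z) ↔ Trybula x y z := by
  simp only [Trybula, min_le_iff]
  ring_nf
  tauto

/-- The full cyclic set. -/
def Tset : Set (ℝ × ℝ × ℝ) :=
  {p : ℝ × ℝ × ℝ |
    p.1 ∈ Set.Icc (0:ℝ) 1 ∧ p.2.1 ∈ Set.Icc (0:ℝ) 1 ∧ p.2.2 ∈ Set.Icc (0:ℝ) 1 ∧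
    Trybula p.1 p.2.1 p.2.2}

def SIset : Set (ℝ × ℝ × ℝ) :=
  {p : ℝ × ℝ × ℝ |
    p.1 ∈ Set.Icc (0:ℝ) 1 ∧ p.2.1 ∈ Set.Icc (0:ℝ) 1 ∧ p.2.2 ∈ Set.Icc (0:ℝ) 1 ∧
    Trybula p.1 p.2.1 p.2.2 ∧ 1/2 < p.1 ∧ p.1 ≤ p.2.1 ∧ p.1 ≤ p.2.2}

def SIIset : Set (ℝ × ℝ × ℝ) :=
  {p : ℝ × ℝ × ℝ |
    p.1 ∈ Set.Icc (0:ℝ) 1 ∧ p.2.1 ∈ Set.Icc (0:ℝ) 1 ∧ p.2.2 ∈ Set.Icc (0:ℝ) 1 ∧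
    Trybula p.1 p.2.1 p.2.2 ∧ p.1 < 1/2 ∧ 1/2 < p.2.1 ∧ 1/2 < p.2.2}

/-! Regions according to position relative to `1/2`. -/

def Areg : Set (ℝ × ℝ × ℝ) := Tset ∩ {p | 1/2 < p.1 ∧ 1/2 < p.2.1 ∧ 1/2 < p.2.2}
def B1reg : Set (ℝ × ℝ × ℝ) := Tset ∩ {p | p.1 < 1/2 ∧ 1/2 < p.2.1 ∧ 1/2 < p.2.2}
def B2reg : Set (ℝ × ℝ × ℝ) := Tset ∩ {p | 1/2 < p.1 ∧ p.2.1 < 1/2 ∧ 1/2 < p.2.2}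
def B3reg : Set (ℝ × ℝ × ℝ) := Tset ∩ {p | 1/2 < p.1 ∧ 1/2 < p.2.1 ∧ p.2.2 < 1/2}
def Dreg : Set (ℝ × ℝ × ℝ) := Tset ∩ {p | p.1 < 1/2 ∧ p.2.1 < 1/2 ∧ p.2.2 < 1/2}
def C1reg : Set (ℝ × ℝ × ℝ) := Tset ∩ {p | 1/2 < p.1 ∧ p.2.1 < 1/2 ∧ p.2.2 < 1/2}
def C2reg : Set (ℝ × ℝ × ℝ) := Tset ∩ {p | p.1 < 1/2 ∧ 1/2 < p.2.1 ∧ p.2.2 < 1/2}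
def C3reg : Set (ℝ × ℝ × ℝ) := Tset ∩ {p | p.1 < 1/2 ∧ p.2.1 < 1/2 ∧ 1/2 < p.2.2}

/-- Piece of `Areg` where the second coordinate is the (strict) minimum. -/
def P2reg : Set (ℝ × ℝ × ℝ) := Tset ∩ {p | 1/2 < p.2.1 ∧ p.2.1 < p.1 ∧ p.2.1 ≤ p.2.2}
/-- Piece of `Areg` where the third coordinate is the strict minimum. -/
def P3reg : Set (ℝ × ℝ × ℝ) := Tset ∩ {p | 1/2 < p.2.2 ∧ p.2.2 < p.1 ∧ p.2.2 < p.2.1}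

/-! ### Measurability -/

lemma meas_Tset : MeasurableSet Tset := by
  unfold Tset
  refine MeasurableSet.inter (measurable_fst measurableSet_Icc) ?_
  refine MeasurableSet.inter ((measurable_fst.comp measurable_snd) measurableSet_Icc) ?_
  refine MeasurableSet.inter ((measurable_snd.comp measurable_snd) measurableSet_Icc) ?_
  apply MeasurableSet.inter <;>
  · apply measurableSet_le (g := fun _ : ℝ × ℝ × ℝ => (1:ℝ)) _ measurable_const
    fun_prop

lemma meas_SI : MeasurableSet SIset := by
  have : SIset = Tset ∩ {p : ℝ × ℝ × ℝ | 1/2 < p.1 ∧ p.1 ≤ p.2.1 ∧ p.1 ≤ p.2.2} := by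
    ext p; simp only [SIset, Tset, Set.mem_inter_iff, Set.mem_setOf_eq]; tauto
  rw [this]
  refine meas_Tset.inter ?_
  refine MeasurableSet.inter (measurable_fst measurableSet_Ioi) ?_
  exact (measurableSet_le measurable_fst (measurable_fst.comp measurable_snd)).inter
    (measurableSet_le measurable_fst (measurable_snd.comp measurable_snd))

lemma meas_SII : MeasurableSet SIIset := by
  have : SIIset = Tset ∩ {p : ℝ × ℝ × ℝ | p.1 < 1/2 ∧ 1/2 < p.2.1 ∧ 1/2 < p.2.2} := by
    ext p; simp only [SIIset, Tset, Set.mem_inter_iff, Set.mem_setOf_eq]; tauto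
  rw [this]
  refine meas_Tset.inter ?_
  exact (measurable_fst measurableSet_Iio).inter
    (((measurable_fst.comp measurable_snd) measurableSet_Ioi).inter
      ((measurable_snd.comp measurable_snd) measurableSet_Ioi))

lemma meas_half (s1 s2 s3 : Bool) :
    MeasurableSet {p : ℝ × ℝ × ℝ |
      (if s1 then 1/2 < p.1 else p.1 < 1/2) ∧
      (if s2 then 1/2 < p.2.1 else p.2.1 < 1/2) ∧
      (if s3 then 1/2 < p.2.2 else p.2.2 < 1/2)} := by
  refine MeasurableSet.inter ?_ (MeasurableSet.inter ?_ ?_)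
  · cases s1
    · exact measurable_fst (measurableSet_Iio (a := (1/2 : ℝ)))
    · exact measurable_fst (measurableSet_Ioi (a := (1/2 : ℝ)))
  · cases s2
    · exact (measurable_fst.comp measurable_snd) (measurableSet_Iio (a := (1/2 : ℝ)))
    · exact (measurable_fst.comp measurable_snd) (measurableSet_Ioi (a := (1/2 : ℝ)))
  · cases s3
    · exact (measurable_snd.comp measurable_snd) (measurableSet_Iio (a := (1/2 : ℝ)))
    · exact (measurable_snd.comp measurable_snd) (measurableSet_Ioi (a := (1/2 : ℝ)))

lemma meas_Areg : MeasurableSet Areg := meas_Tset.inter (by simpa using meas_half true true true)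
lemma meas_B1reg : MeasurableSet B1reg := meas_Tset.inter (by simpa using meas_half false true true)
lemma meas_B2reg : MeasurableSet B2reg := meas_Tset.inter (by simpa using meas_half true false true)
lemma meas_B3reg : MeasurableSet B3reg := meas_Tset.inter (by simpa using meas_half true true false)
lemma meas_Dreg : MeasurableSet Dreg := meas_Tset.inter (by simpa using meas_half false false false)
lemma meas_C1reg : MeasurableSet C1reg := meas_Tset.inter (by simpa using meas_half true false false)
lemma meas_C2reg : MeasurableSet C2reg := meas_Tset.inter (by simpa using meas_half false true false)
lemma meas_C3reg : MeasurableSet C3reg := meas_Tset.inter (by simpa using meas_half false false true)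

lemma meas_P2reg : MeasurableSet P2reg := by
  refine meas_Tset.inter ?_
  exact ((measurable_fst.comp measurable_snd) measurableSet_Ioi).inter
    ((measurableSet_lt (measurable_fst.comp measurable_snd) measurable_fst).inter
      (measurableSet_le (measurable_fst.comp measurable_snd) (measurable_snd.comp measurable_snd)))

lemma meas_P3reg : MeasurableSet P3reg := by
  refine meas_Tset.inter ?_
  exact ((measurable_snd.comp measurable_snd) measurableSet_Ioi).inter
    ((measurableSet_lt (measurable_snd.comp measurable_snd) measurable_fst).inter
      (measurableSet_lt (measurable_snd.comp measurable_snd) (measurable_fst.comp measurable_snd)))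

/-! ### Null sets -/

lemma null_x (c : ℝ) : volume {p : ℝ × ℝ × ℝ | p.1 = c} = 0 := by
  have : {p : ℝ × ℝ × ℝ | p.1 = c} = ({c} : Set ℝ) ×ˢ (Set.univ : Set (ℝ × ℝ)) := by
    ext ⟨a, b, d⟩; simp [Set.mem_prod, eq_comm]
  rw [this, Measure.volume_eq_prod, Measure.prod_prod]
  simp

lemma null_y (c : ℝ) : volume {p : ℝ × ℝ × ℝ | p.2.1 = c} = 0 := by
  have : {p : ℝ × ℝ × ℝ | p.2.1 = c} =
      (Set.univ : Set ℝ) ×ˢ (({c} : Set ℝ) ×ˢ (Set.univ : Set ℝ)) := by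
    ext ⟨a, b, d⟩; simp [Set.mem_prod, eq_comm]
  rw [this, Measure.volume_eq_prod, Measure.prod_prod, Measure.volume_eq_prod, Measure.prod_prod]
  simp

lemma null_z (c : ℝ) : volume {p : ℝ × ℝ × ℝ | p.2.2 = c} = 0 := by
  have : {p : ℝ × ℝ × ℝ | p.2.2 = c} =
      (Set.univ : Set ℝ) ×ˢ ((Set.univ : Set ℝ) ×ˢ ({c} : Set ℝ)) := by
    ext ⟨a, b, d⟩; simp [Set.mem_prod, eq_comm]
  rw [this, Measure.volume_eq_prod, Measure.prod_prod, Measure.volume_eq_prod, Measure.prod_prod]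
  simp

lemma slice_null_fst (x : ℝ) : (volume : Measure (ℝ × ℝ)) {a : ℝ × ℝ | x = a.1} = 0 := by
  have : {a : ℝ × ℝ | x = a.1} = ({x} : Set ℝ) ×ˢ (Set.univ : Set ℝ) := by
    ext ⟨a, b⟩; simp [eq_comm]
  rw [this, Measure.volume_eq_prod, Measure.prod_prod]; simp

lemma slice_null_snd (x : ℝ) : (volume : Measure (ℝ × ℝ)) {a : ℝ × ℝ | x = a.2} = 0 := by
  have : {a : ℝ × ℝ | x = a.2} = (Set.univ : Set ℝ) ×ˢ ({x} : Set ℝ) := by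
    ext ⟨a, b⟩; simp [eq_comm]
  rw [this, Measure.volume_eq_prod, Measure.prod_prod]; simp

lemma null_xy : volume {p : ℝ × ℝ × ℝ | p.1 = p.2.1} = 0 := by
  have hm : MeasurableSet {p : ℝ × ℝ × ℝ | p.1 = p.2.1} :=
    measurableSet_eq_fun measurable_fst (measurable_fst.comp measurable_snd)
  rw [Measure.volume_eq_prod, Measure.prod_apply hm]
  simp [slice_null_fst]

lemma null_xz : volume {p : ℝ × ℝ × ℝ | p.1 = p.2.2} = 0 := by
  have hm : MeasurableSet {p : ℝ × ℝ × ℝ | p.1 = p.2.2} :=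
    measurableSet_eq_fun measurable_fst (measurable_snd.comp measurable_snd)
  rw [Measure.volume_eq_prod, Measure.prod_apply hm]
  simp [slice_null_snd]

lemma null_diag2 : (volume : Measure (ℝ × ℝ)) {q : ℝ × ℝ | q.1 = q.2} = 0 := by
  have hm : MeasurableSet {q : ℝ × ℝ | q.1 = q.2} :=
    measurableSet_eq_fun measurable_fst measurable_snd
  rw [Measure.volume_eq_prod, Measure.prod_apply hm]
  have h : ∀ x : ℝ, (volume : Measure ℝ) {b : ℝ | x = b} = 0 := by
    intro x
    have : {b : ℝ | x = b} = ({x} : Set ℝ) := by ext b; simp [eq_comm]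
    rw [this]; simp
  simp [h]

lemma null_yz : volume {p : ℝ × ℝ × ℝ | p.2.1 = p.2.2} = 0 := by
  have : {p : ℝ × ℝ × ℝ | p.2.1 = p.2.2} =
      (Set.univ : Set ℝ) ×ˢ {q : ℝ × ℝ | q.1 = q.2} := by
    ext ⟨a, b, d⟩; simp [Set.mem_prod]
  rw [this, Measure.volume_eq_prod, Measure.prod_prod, null_diag2]
  simp

/-! ### Measure preserving maps -/

lemma mp_flip1 : MeasurePreserving (fun x : ℝ => 1 - x) volume volume :=
  Measure.measurePreserving_sub_left volume 1

lemma mp_s23 : MeasurePreserving (fun p : ℝ × ℝ × ℝ => (p.1, p.2.2, p.2.1)) volume volume := by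
  rw [show (volume : Measure (ℝ × ℝ × ℝ))
      = (volume : Measure ℝ).prod ((volume : Measure ℝ).prod volume) from (Measure.volume_eq_prod _ _)]
  exact (MeasurePreserving.id _).prod Measure.measurePreserving_swap

lemma mp_flip3 :
    MeasurePreserving (fun p : ℝ × ℝ × ℝ => (1 - p.1, 1 - p.2.1, 1 - p.2.2)) volume volume := by
  rw [show (volume : Measure (ℝ × ℝ × ℝ))
      = (volume : Measure ℝ).prod ((volume : Measure ℝ).prod volume) from (Measure.volume_eq_prod _ _)]
  exact mp_flip1.prod (mp_flip1.prod mp_flip1)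

lemma mp_s12 : MeasurePreserving (fun p : ℝ × ℝ × ℝ => (p.2.1, p.1, p.2.2)) volume volume := by
  have h1 : MeasurePreserving (MeasurableEquiv.prodAssoc : (ℝ × ℝ) × ℝ ≃ᵐ ℝ × ℝ × ℝ)
      volume volume := volume_preserving_prodAssoc
  have h2 : MeasurePreserving (MeasurableEquiv.prodAssoc.symm : ℝ × ℝ × ℝ ≃ᵐ (ℝ × ℝ) × ℝ)
      volume volume := h1.symm _
  have h3 : MeasurePreserving (fun q : (ℝ × ℝ) × ℝ => (Prod.swap q.1, q.2)) volume volume := by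
    rw [show (volume : Measure ((ℝ × ℝ) × ℝ))
        = (volume : Measure (ℝ × ℝ)).prod volume from (Measure.volume_eq_prod _ _)]
    refine MeasurePreserving.prod ?_ (MeasurePreserving.id _)
    rw [show (volume : Measure (ℝ × ℝ))
        = (volume : Measure ℝ).prod volume from (Measure.volume_eq_prod _ _)]
    exact Measure.measurePreserving_swap
  exact (h1.comp (h3.comp h2) : _)

lemma mp_s13 : MeasurePreserving (fun p : ℝ × ℝ × ℝ => (p.2.2, p.2.1, p.1)) volume volume :=
  (mp_s23.comp (mp_s12.comp mp_s23) : _)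

/-! ### Volume identities between the pieces -/

lemma vol_P2 : volume P2reg = volume SIset := by
  have hpre : volume ((fun p : ℝ × ℝ × ℝ => (p.2.1, p.1, p.2.2)) ⁻¹' SIset) = volume SIset :=
    mp_s12.measure_preimage meas_SI.nullMeasurableSet
  have h1 : P2reg ⊆ (fun p : ℝ × ℝ × ℝ => (p.2.1, p.1, p.2.2)) ⁻¹' SIset := by
    rintro p ⟨⟨hx, hy, hz, ht⟩, hh, hlt, hle⟩
    exact ⟨hy, hx, hz, (try_swap12 _ _ _).mpr ht, hh, hlt.le, hle⟩
  have h2 : (fun p : ℝ × ℝ × ℝ => (p.2.1, p.1, p.2.2)) ⁻¹' SIset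
      ⊆ P2reg ∪ {p : ℝ × ℝ × ℝ | p.1 = p.2.1} := by
    rintro p ⟨hy, hx, hz, ht, hh, hle1, hle2⟩
    rcases eq_or_lt_of_le hle1 with h | h
    · exact Or.inr h.symm
    · exact Or.inl ⟨⟨hx, hy, hz, (try_swap12 _ _ _).mp ht⟩, hh, h, hle2⟩
  refine le_antisymm ?_ ?_
  · calc volume P2reg ≤ volume ((fun p : ℝ × ℝ × ℝ => (p.2.1, p.1, p.2.2)) ⁻¹' SIset) :=
          measure_mono h1
      _ = volume SIset := hpre
  · calc volume SIset = volume ((fun p : ℝ × ℝ × ℝ => (p.2.1, p.1, p.2.2)) ⁻¹' SIset) := hpre.symm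
      _ ≤ volume (P2reg ∪ {p : ℝ × ℝ × ℝ | p.1 = p.2.1}) := measure_mono h2
      _ ≤ volume P2reg + volume {p : ℝ × ℝ × ℝ | p.1 = p.2.1} := measure_union_le _ _
      _ = volume P2reg := by rw [null_xy, add_zero]

lemma vol_P3 : volume P3reg = volume SIset := by
  have hpre : volume ((fun p : ℝ × ℝ × ℝ => (p.2.2, p.2.1, p.1)) ⁻¹' SIset) = volume SIset :=
    mp_s13.measure_preimage meas_SI.nullMeasurableSet
  have h1 : P3reg ⊆ (fun p : ℝ × ℝ × ℝ => (p.2.2, p.2.1, p.1)) ⁻¹' SIset := by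
    rintro p ⟨⟨hx, hy, hz, ht⟩, hh, hlt1, hlt2⟩
    exact ⟨hz, hy, hx, (try_swap13 _ _ _).mpr ht, hh, hlt2.le, hlt1.le⟩
  have h2 : (fun p : ℝ × ℝ × ℝ => (p.2.2, p.2.1, p.1)) ⁻¹' SIset
      ⊆ P3reg ∪ ({p : ℝ × ℝ × ℝ | p.1 = p.2.2} ∪ {p : ℝ × ℝ × ℝ | p.2.1 = p.2.2}) := by
    rintro p ⟨hz, hy, hx, ht, hh, hle1, hle2⟩
    rcases eq_or_lt_of_le hle1 with h | h
    · exact Or.inr (Or.inr h.symm)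
    rcases eq_or_lt_of_le hle2 with h' | h'
    · exact Or.inr (Or.inl h'.symm)
    · exact Or.inl ⟨⟨hx, hy, hz, (try_swap13 _ _ _).mp ht⟩, hh, h', h⟩
  refine le_antisymm ?_ ?_
  · calc volume P3reg ≤ volume ((fun p : ℝ × ℝ × ℝ => (p.2.2, p.2.1, p.1)) ⁻¹' SIset) :=
          measure_mono h1
      _ = volume SIset := hpre
  · calc volume SIset = volume ((fun p : ℝ × ℝ × ℝ => (p.2.2, p.2.1, p.1)) ⁻¹' SIset) := hpre.symm
      _ ≤ volume (P3reg ∪ ({p : ℝ × ℝ × ℝ | p.1 = p.2.2} ∪ {p : ℝ × ℝ × ℝ | p.2.1 = p.2.2})) :=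
          measure_mono h2
      _ ≤ volume P3reg + volume ({p : ℝ × ℝ × ℝ | p.1 = p.2.2} ∪ {p : ℝ × ℝ × ℝ | p.2.1 = p.2.2}) :=
          measure_union_le _ _
      _ = volume P3reg := by
          rw [measure_union_null null_xz null_yz, add_zero]

lemma vol_Areg : volume Areg = 3 * volume SIset := by
  have hsplit : Areg = SIset ∪ (P2reg ∪ P3reg) := by
    ext p
    simp only [Areg, SIset, P2reg, P3reg, Tset, Set.mem_inter_iff, Set.mem_union,
      Set.mem_setOf_eq]
    constructor
    · rintro ⟨⟨hx, hy, hz, ht⟩, h1, h2, h3⟩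
      rcases le_or_gt p.1 p.2.1 with a | a
      · rcases le_or_gt p.1 p.2.2 with b | b
        · exact Or.inl ⟨hx, hy, hz, ht, h1, a, b⟩
        · exact Or.inr (Or.inr ⟨⟨hx, hy, hz, ht⟩, h3, b, lt_of_lt_of_le b a⟩)
      · rcases le_or_gt p.2.1 p.2.2 with b | b
        · exact Or.inr (Or.inl ⟨⟨hx, hy, hz, ht⟩, h2, a, b⟩)
        · exact Or.inr (Or.inr ⟨⟨hx, hy, hz, ht⟩, h3, lt_trans b a, b⟩)
    · rintro (⟨hx, hy, hz, ht, h1, h2, h3⟩ | ⟨⟨hx, hy, hz, ht⟩, h1, h2, h3⟩ |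
        ⟨⟨hx, hy, hz, ht⟩, h1, h2, h3⟩)
      · exact ⟨⟨hx, hy, hz, ht⟩, h1, lt_of_lt_of_le h1 h2, lt_of_lt_of_le h1 h3⟩
      · exact ⟨⟨hx, hy, hz, ht⟩, lt_trans h1 h2, h1, lt_of_lt_of_le h1 h3⟩
      · exact ⟨⟨hx, hy, hz, ht⟩, lt_trans h1 h2, lt_trans h1 h3, h1⟩
  have d23 : Disjoint P2reg P3reg := by
    refine Set.disjoint_left.mpr ?_
    rintro p ⟨-, h1, h2, h3⟩ ⟨-, g1, g2, g3⟩
    linarith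
  have d1 : Disjoint SIset (P2reg ∪ P3reg) := by
    refine Set.disjoint_left.mpr ?_
    rintro p hp hq
    obtain ⟨-, -, -, -, -, h2, h3⟩ := hp
    rcases hq with ⟨-, g1, g2, g3⟩ | ⟨-, g1, g2, g3⟩ <;> linarith
  rw [hsplit, measure_union d1 (meas_P2reg.union meas_P3reg),
    measure_union d23 meas_P3reg, vol_P2, vol_P3]
  ring

lemma vol_B2 : volume B2reg = volume SIIset := by
  have : B2reg = (fun p : ℝ × ℝ × ℝ => (p.2.1, p.1, p.2.2)) ⁻¹' SIIset := by
    ext p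
    simp only [B2reg, Tset, SIIset, Set.mem_inter_iff, Set.mem_setOf_eq, Set.mem_preimage]
    constructor
    · rintro ⟨⟨hx, hy, hz, ht⟩, h1, h2, h3⟩
      exact ⟨hy, hx, hz, (try_swap12 _ _ _).mpr ht, h2, h1, h3⟩
    · rintro ⟨hy, hx, hz, ht, h2, h1, h3⟩
      exact ⟨⟨hx, hy, hz, (try_swap12 _ _ _).mp ht⟩, h1, h2, h3⟩
  rw [this]
  exact mp_s12.measure_preimage meas_SII.nullMeasurableSet

lemma vol_B3 : volume B3reg = volume SIIset := by
  have : B3reg = (fun p : ℝ × ℝ × ℝ => (p.2.2, p.2.1, p.1)) ⁻¹' SIIset := by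
    ext p
    simp only [B3reg, Tset, SIIset, Set.mem_inter_iff, Set.mem_setOf_eq, Set.mem_preimage]
    constructor
    · rintro ⟨⟨hx, hy, hz, ht⟩, h1, h2, h3⟩
      exact ⟨hz, hy, hx, (try_swap13 _ _ _).mpr ht, h3, h2, h1⟩
    · rintro ⟨hz, hy, hx, ht, h3, h2, h1⟩
      exact ⟨⟨hx, hy, hz, (try_swap13 _ _ _).mp ht⟩, h1, h2, h3⟩
  rw [this]
  exact mp_s13.measure_preimage meas_SII.nullMeasurableSet

lemma flip_mem_Icc {x : ℝ} : 1 - x ∈ Set.Icc (0:ℝ) 1 ↔ x ∈ Set.Icc (0:ℝ) 1 := by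
  simp only [Set.mem_Icc]; constructor <;> rintro ⟨a, b⟩ <;> constructor <;> linarith

lemma vol_Dreg : volume Dreg = volume Areg := by
  have : Dreg = (fun p : ℝ × ℝ × ℝ => (1 - p.1, 1 - p.2.1, 1 - p.2.2)) ⁻¹' Areg := by
    ext p
    simp only [Dreg, Areg, Tset, Set.mem_inter_iff, Set.mem_setOf_eq, Set.mem_preimage]
    constructor
    · rintro ⟨⟨hx, hy, hz, ht⟩, h1, h2, h3⟩
      exact ⟨⟨flip_mem_Icc.mpr hx, flip_mem_Icc.mpr hy, flip_mem_Icc.mpr hz,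
        (try_flip _ _ _).mpr ht⟩, by linarith, by linarith, by linarith⟩
    · rintro ⟨⟨hx, hy, hz, ht⟩, h1, h2, h3⟩
      exact ⟨⟨flip_mem_Icc.mp hx, flip_mem_Icc.mp hy, flip_mem_Icc.mp hz,
        (try_flip _ _ _).mp ht⟩, by linarith, by linarith, by linarith⟩
  rw [this]
  exact mp_flip3.measure_preimage meas_Areg.nullMeasurableSet

lemma vol_C1 : volume C1reg = volume SIIset := by
  have : C1reg = (fun p : ℝ × ℝ × ℝ => (1 - p.1, 1 - p.2.1, 1 - p.2.2)) ⁻¹' SIIset := by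
    ext p
    simp only [C1reg, Tset, SIIset, Set.mem_inter_iff, Set.mem_setOf_eq, Set.mem_preimage]
    constructor
    · rintro ⟨⟨hx, hy, hz, ht⟩, h1, h2, h3⟩
      exact ⟨flip_mem_Icc.mpr hx, flip_mem_Icc.mpr hy, flip_mem_Icc.mpr hz,
        (try_flip _ _ _).mpr ht, by linarith, by linarith, by linarith⟩
    · rintro ⟨hx, hy, hz, ht, h1, h2, h3⟩
      exact ⟨⟨flip_mem_Icc.mp hx, flip_mem_Icc.mp hy, flip_mem_Icc.mp hz,
        (try_flip _ _ _).mp ht⟩, by linarith, by linarith, by linarith⟩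
  rw [this]
  exact mp_flip3.measure_preimage meas_SII.nullMeasurableSet

lemma vol_C2 : volume C2reg = volume B2reg := by
  have : C2reg = (fun p : ℝ × ℝ × ℝ => (1 - p.1, 1 - p.2.1, 1 - p.2.2)) ⁻¹' B2reg := by
    ext p
    simp only [C2reg, B2reg, Tset, Set.mem_inter_iff, Set.mem_setOf_eq, Set.mem_preimage]
    constructor
    · rintro ⟨⟨hx, hy, hz, ht⟩, h1, h2, h3⟩
      exact ⟨⟨flip_mem_Icc.mpr hx, flip_mem_Icc.mpr hy, flip_mem_Icc.mpr hz,
        (try_flip _ _ _).mpr ht⟩, by linarith, by linarith, by linarith⟩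
    · rintro ⟨⟨hx, hy, hz, ht⟩, h1, h2, h3⟩
      exact ⟨⟨flip_mem_Icc.mp hx, flip_mem_Icc.mp hy, flip_mem_Icc.mp hz,
        (try_flip _ _ _).mp ht⟩, by linarith, by linarith, by linarith⟩
  rw [this]
  exact mp_flip3.measure_preimage meas_B2reg.nullMeasurableSet

lemma vol_C3 : volume C3reg = volume B3reg := by
  have : C3reg = (fun p : ℝ × ℝ × ℝ => (1 - p.1, 1 - p.2.1, 1 - p.2.2)) ⁻¹' B3reg := by
    ext p
    simp only [C3reg, B3reg, Tset, Set.mem_inter_iff, Set.mem_setOf_eq, Set.mem_preimage]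
    constructor
    · rintro ⟨⟨hx, hy, hz, ht⟩, h1, h2, h3⟩
      exact ⟨⟨flip_mem_Icc.mpr hx, flip_mem_Icc.mpr hy, flip_mem_Icc.mpr hz,
        (try_flip _ _ _).mpr ht⟩, by linarith, by linarith, by linarith⟩
    · rintro ⟨⟨hx, hy, hz, ht⟩, h1, h2, h3⟩
      exact ⟨⟨flip_mem_Icc.mp hx, flip_mem_Icc.mp hy, flip_mem_Icc.mp hz,
        (try_flip _ _ _).mp ht⟩, by linarith, by linarith, by linarith⟩
  rw [this]
  exact mp_flip3.measure_preimage meas_B3reg.nullMeasurableSet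

lemma vol_C1' : volume C1reg = volume SIIset := vol_C1

/-! ### The partition of `Tset` -/

def Nset : Set (ℝ × ℝ × ℝ) :=
  {p : ℝ × ℝ × ℝ | p.1 = 1/2} ∪ ({p : ℝ × ℝ × ℝ | p.2.1 = 1/2} ∪ {p : ℝ × ℝ × ℝ | p.2.2 = 1/2})

lemma null_N : volume Nset = 0 := by
  unfold Nset
  exact measure_union_null (null_x _) (measure_union_null (null_y _) (null_z _))

lemma vol_T_diff : volume Tset = volume (Tset \ Nset) := by
  refine le_antisymm ?_ (measure_mono Set.diff_subset)
  calc volume Tset ≤ volume ((Tset \ Nset) ∪ Nset) := by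
        refine measure_mono ?_
        intro p hp
        by_cases h : p ∈ Nset
        · exact Or.inr h
        · exact Or.inl ⟨hp, h⟩
    _ ≤ volume (Tset \ Nset) + volume Nset := measure_union_le _ _
    _ = volume (Tset \ Nset) := by rw [null_N, add_zero]

lemma cover : Tset \ Nset =
    Areg ∪ (B1reg ∪ (B2reg ∪ (B3reg ∪ (Dreg ∪ (C1reg ∪ (C2reg ∪ C3reg)))))) := by
  apply Set.Subset.antisymm
  · rintro p ⟨hT, hN⟩
    simp only [Nset, Set.mem_union, Set.mem_setOf_eq, not_or] at hN
    obtain ⟨h1, h2, h3⟩ := hN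
    simp only [Set.mem_union]
    rcases lt_or_gt_of_ne h1 with a | a <;> rcases lt_or_gt_of_ne h2 with b | b <;>
      rcases lt_or_gt_of_ne h3 with c | c
    · exact Or.inr (Or.inr (Or.inr (Or.inr (Or.inl ⟨hT, a, b, c⟩))))
    · exact Or.inr (Or.inr (Or.inr (Or.inr (Or.inr (Or.inr (Or.inr ⟨hT, a, b, c⟩))))))
    · exact Or.inr (Or.inr (Or.inr (Or.inr (Or.inr (Or.inr (Or.inl ⟨hT, a, b, c⟩))))))
    · exact Or.inr (Or.inl ⟨hT, a, b, c⟩)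
    · exact Or.inr (Or.inr (Or.inr (Or.inr (Or.inr (Or.inl ⟨hT, a, b, c⟩)))))
    · exact Or.inr (Or.inr (Or.inl ⟨hT, a, b, c⟩))
    · exact Or.inr (Or.inr (Or.inr (Or.inl ⟨hT, a, b, c⟩)))
    · exact Or.inl ⟨hT, a, b, c⟩
  · have hmem : ∀ p : ℝ × ℝ × ℝ, p.1 ≠ 1/2 → p.2.1 ≠ 1/2 → p.2.2 ≠ 1/2 → p ∉ Nset := by
      intro p a b c
      simp only [Nset, Set.mem_union, Set.mem_setOf_eq, not_or]
      exact ⟨a, b, c⟩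
    refine Set.union_subset ?_ (Set.union_subset ?_ (Set.union_subset ?_ (Set.union_subset ?_
      (Set.union_subset ?_ (Set.union_subset ?_ (Set.union_subset ?_ ?_)))))) <;>
      rintro p ⟨hT, a, b, c⟩ <;>
      exact ⟨hT, hmem p (by first | exact a.ne | exact a.ne')
        (by first | exact b.ne | exact b.ne') (by first | exact c.ne | exact c.ne')⟩

lemma vol_T_sum : volume Tset =
    volume Areg + (volume B1reg + (volume B2reg + (volume B3reg +
      (volume Dreg + (volume C1reg + (volume C2reg + volume C3reg)))))) := by
  have disj : ∀ (X Y : Set (ℝ × ℝ × ℝ))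
      (c1 c2 : (ℝ × ℝ × ℝ) → Prop),
      X = Tset ∩ {p | c1 p} → Y = Tset ∩ {p | c2 p} →
      (∀ p, c1 p → c2 p → False) → Disjoint X Y := by
    rintro X Y c1 c2 rfl rfl h
    refine Set.disjoint_left.mpr ?_
    rintro p ⟨-, h1⟩ ⟨-, h2⟩
    exact h p h1 h2
  rw [vol_T_diff, cover]
  rw [measure_union ?d1 (meas_B1reg.union (meas_B2reg.union (meas_B3reg.union
        (meas_Dreg.union (meas_C1reg.union (meas_C2reg.union meas_C3reg))))))]
  rw [measure_union ?d2 (meas_B2reg.union (meas_B3reg.union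
        (meas_Dreg.union (meas_C1reg.union (meas_C2reg.union meas_C3reg)))))]
  rw [measure_union ?d3 (meas_B3reg.union
        (meas_Dreg.union (meas_C1reg.union (meas_C2reg.union meas_C3reg))))]
  rw [measure_union ?d4 (meas_Dreg.union (meas_C1reg.union (meas_C2reg.union meas_C3reg)))]
  rw [measure_union ?d5 (meas_C1reg.union (meas_C2reg.union meas_C3reg))]
  rw [measure_union ?d6 (meas_C2reg.union meas_C3reg)]
  rw [measure_union ?d7 meas_C3reg]
  case d7 =>
    exact disj _ _ _ _ rfl rfl (fun p ⟨a, b, c⟩ ⟨d, e, f⟩ => by linarith)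
  case d6 =>
    refine Set.disjoint_union_right.mpr ⟨?_, ?_⟩ <;>
      exact disj _ _ _ _ rfl rfl (fun p ⟨a, b, c⟩ ⟨d, e, f⟩ => by linarith)
  case d5 =>
    refine Set.disjoint_union_right.mpr ⟨?_, Set.disjoint_union_right.mpr ⟨?_, ?_⟩⟩ <;>
      exact disj _ _ _ _ rfl rfl (fun p ⟨a, b, c⟩ ⟨d, e, f⟩ => by linarith)
  case d4 =>
    refine Set.disjoint_union_right.mpr ⟨?_, Set.disjoint_union_right.mpr ⟨?_,
      Set.disjoint_union_right.mpr ⟨?_, ?_⟩⟩⟩ <;>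
      exact disj _ _ _ _ rfl rfl (fun p ⟨a, b, c⟩ ⟨d, e, f⟩ => by linarith)
  case d3 =>
    refine Set.disjoint_union_right.mpr ⟨?_, Set.disjoint_union_right.mpr ⟨?_,
      Set.disjoint_union_right.mpr ⟨?_, Set.disjoint_union_right.mpr ⟨?_, ?_⟩⟩⟩⟩ <;>
      exact disj _ _ _ _ rfl rfl (fun p ⟨a, b, c⟩ ⟨d, e, f⟩ => by linarith)
  case d2 =>
    refine Set.disjoint_union_right.mpr ⟨?_, Set.disjoint_union_right.mpr ⟨?_,
      Set.disjoint_union_right.mpr ⟨?_, Set.disjoint_union_right.mpr ⟨?_,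
      Set.disjoint_union_right.mpr ⟨?_, ?_⟩⟩⟩⟩⟩ <;>
      exact disj _ _ _ _ rfl rfl (fun p ⟨a, b, c⟩ ⟨d, e, f⟩ => by linarith)
  case d1 =>
    refine Set.disjoint_union_right.mpr ⟨?_, Set.disjoint_union_right.mpr ⟨?_,
      Set.disjoint_union_right.mpr ⟨?_, Set.disjoint_union_right.mpr ⟨?_,
      Set.disjoint_union_right.mpr ⟨?_, Set.disjoint_union_right.mpr ⟨?_, ?_⟩⟩⟩⟩⟩⟩ <;>
      exact disj _ _ _ _ rfl rfl (fun p ⟨a, b, c⟩ ⟨d, e, f⟩ => by linarith)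

theorem vol_C3_splitup :
    volume {p : ℝ × ℝ × ℝ |
        p.1 ∈ Set.Icc (0:ℝ) 1 ∧ p.2.1 ∈ Set.Icc (0:ℝ) 1 ∧ p.2.2 ∈ Set.Icc (0:ℝ) 1 ∧
        Trybula p.1 p.2.1 p.2.2}
      = 6 * volume {p : ℝ × ℝ × ℝ |
        p.1 ∈ Set.Icc (0:ℝ) 1 ∧ p.2.1 ∈ Set.Icc (0:ℝ) 1 ∧ p.2.2 ∈ Set.Icc (0:ℝ) 1 ∧
        Trybula p.1 p.2.1 p.2.2 ∧ 1/2 < p.1 ∧ p.1 ≤ p.2.1 ∧ p.1 ≤ p.2.2}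
      + 6 * volume {p : ℝ × ℝ × ℝ |
        p.1 ∈ Set.Icc (0:ℝ) 1 ∧ p.2.1 ∈ Set.Icc (0:ℝ) 1 ∧ p.2.2 ∈ Set.Icc (0:ℝ) 1 ∧
        Trybula p.1 p.2.1 p.2.2 ∧ p.1 < 1/2 ∧ 1/2 < p.2.1 ∧ 1/2 < p.2.2} := by
  show volume Tset = 6 * volume SIset + 6 * volume SIIset
  have hB1 : volume B1reg = volume SIIset := by
    congr 1
    ext p
    simp only [B1reg, Tset, SIIset, Set.mem_inter_iff, Set.mem_setOf_eq]
    tauto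
  rw [vol_T_sum, vol_Areg, hB1, vol_B2, vol_B3, vol_Dreg, vol_Areg, vol_C1, vol_C2, vol_C3,
    vol_B2, vol_B3]
  ring
end

section
/- For every n ≥ 3, if an n-tuple (x_1,...,x_n) ∈ [0,1]^n satisfies x_i + x_{i+1} ≥ 1 and x_{i+2} + x_{i+3} ≤ 1 for some index i (indices modulo n), then (x_1,...,x_n) is cyclic. -/
open MeasureTheory ProbabilityTheory

def CyclicTuple (n : ℕ) (x : Fin n → ℝ) : Prop :=
  ∃ (Ω : Type) (_ : MeasureSpace Ω), IsProbabilityMeasure (ℙ : Measure Ω) ∧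
    ∃ U : Fin n → Ω → ℝ, (∀ i, Measurable (U i)) ∧
      iIndepFun U ℙ ∧
      (∀ i j, i ≠ j → (ℙ {ω | U i ω = U j ω} = 0)) ∧
      (∀ i : Fin n, ℙ {ω | U i ω < U (finRotate n i) ω} = ENNReal.ofReal (x i))

section UpDownAux

open Set

noncomputable section

namespace UpDownAux

/-- Bernoulli-type measure on `Bool`. -/
def ber (p : ℝ) : Measure Bool :=
  ENNReal.ofReal p • Measure.dirac true + ENNReal.ofReal (1 - p) • Measure.dirac false

lemma ber_apply (p : ℝ) (s : Set Bool) :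
    ber p s = (ENNReal.ofReal p) * s.indicator 1 true
      + (ENNReal.ofReal (1 - p)) * s.indicator 1 false := by
  simp [ber, Measure.dirac_apply]

lemma ber_true (p : ℝ) : ber p {true} = ENNReal.ofReal p := by
  simp [ber_apply]

lemma ber_false (p : ℝ) : ber p {false} = ENNReal.ofReal (1 - p) := by
  simp [ber_apply]

lemma ber_prob (p : ℝ) (h0 : 0 ≤ p) (h1 : p ≤ 1) : IsProbabilityMeasure (ber p) := by
  constructor
  rw [ber_apply]
  simp only [indicator_of_mem (mem_univ _), Pi.one_apply, mul_one]
  rw [← ENNReal.ofReal_add h0 (by linarith)]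
  norm_num

variable {n : ℕ}

lemma eval_preimage (μ : Fin n → Measure Bool) [∀ k, IsProbabilityMeasure (μ k)]
    (k : Fin n) (s : Set Bool) :
    Measure.pi μ ((fun ω : Fin n → Bool => ω k) ⁻¹' s) = μ k s := by
  have h1 : (fun ω : Fin n → Bool => ω k) ⁻¹' s
      = Set.pi univ (Function.update (fun _ : Fin n => (univ : Set Bool)) k s) := by
    ext ω
    simp only [mem_preimage, mem_univ_pi]
    constructor
    · intro h j
      rcases eq_or_ne j k with rfl | hj
      · rwa [Function.update_self]
      · rw [Function.update_of_ne hj]; trivial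
    · intro h
      have := h k
      rwa [Function.update_self] at this
  rw [h1, Measure.pi_pi]
  rw [Finset.prod_eq_single k]
  · rw [Function.update_self]
  · intro b _ hb
    rw [Function.update_of_ne hb]
    exact measure_univ
  · intro h; exact absurd (Finset.mem_univ k) h

lemma iIndep_eval (μ : Fin n → Measure Bool) [∀ k, IsProbabilityMeasure (μ k)] :
    iIndepFun
      (fun k (ω : Fin n → Bool) => ω k) (Measure.pi μ) := by
  rw [iIndepFun_iff_measure_inter_preimage_eq_mul]
  intro S sets _
  have h1 : (⋂ i ∈ S, (fun ω : Fin n → Bool => ω i) ⁻¹' sets i)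
      = Set.pi univ (fun j => if j ∈ S then sets j else univ) := by
    ext ω
    simp only [mem_iInter, mem_preimage, mem_univ_pi]
    constructor
    · intro h j
      split
      · exact h j ‹_›
      · trivial
    · intro h j hj
      have := h j
      rwa [if_pos hj] at this
  rw [h1, Measure.pi_pi]
  have h2 : ∀ j : Fin n, μ j (if j ∈ S then sets j else univ)
      = if j ∈ S then μ j (sets j) else 1 := by
    intro j; split
    · rfl
    · exact measure_univ
  calc ∏ j, μ j (if j ∈ S then sets j else univ)
      = ∏ j, if j ∈ S then μ j (sets j) else 1 := Finset.prod_congr rfl fun j _ => h2 j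
    _ = ∏ j ∈ Finset.univ ∩ S, μ j (sets j) := Finset.prod_ite_mem _ _ _
    _ = ∏ j ∈ S, μ j (sets j) := by rw [Finset.univ_inter]
    _ = ∏ j ∈ S, Measure.pi μ ((fun ω : Fin n → Bool => ω j) ⁻¹' sets j) :=
        Finset.prod_congr rfl fun j _ => (eval_preimage μ j (sets j)).symm

lemma cyclic_core (n : ℕ) (hn : 2 ≤ n) (x : Fin n → ℝ) (a b q : Fin n → ℝ)
    (hq0 : ∀ k, 0 ≤ q k) (hq1 : ∀ k, q k ≤ 1)
    (hdist : ∀ k l : Fin n, k ≠ l → a k ≠ a l ∧ a k ≠ b l ∧ b k ≠ a l ∧ b k ≠ b l)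
    (hx : ∀ k, (1 - q k) * (1 - q (finRotate n k)) * (if a k < a (finRotate n k) then (1:ℝ) else 0)
        + (1 - q k) * q (finRotate n k) * (if a k < b (finRotate n k) then (1:ℝ) else 0)
        + q k * (1 - q (finRotate n k)) * (if b k < a (finRotate n k) then (1:ℝ) else 0)
        + q k * q (finRotate n k) * (if b k < b (finRotate n k) then (1:ℝ) else 0) = x k) :
    CyclicTuple n x := by
  classical
  set μ : Fin n → Measure Bool := fun k => ber (q k) with hμ
  haveI : ∀ k, IsProbabilityMeasure (μ k) := fun k => ber_prob _ (hq0 k) (hq1 k)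
  set v : Fin n → Bool → ℝ := fun k s => if s then b k else a k with hv
  refine ⟨(Fin n → Bool), ⟨Measure.pi μ⟩,
    (inferInstance : IsProbabilityMeasure (Measure.pi μ)),
    fun k ω => v k (ω k), ?_, ?_, ?_, ?_⟩
  · intro k
    exact (Measurable.of_discrete (f := v k)).comp (measurable_pi_apply k)
  · exact (iIndep_eval μ).comp v (fun k => Measurable.of_discrete (f := v k))
  · intro k l hkl
    have : {ω : Fin n → Bool | v k (ω k) = v l (ω l)} = ∅ := by
      ext ω
      simp only [mem_setOf_eq, mem_empty_iff_false, iff_false]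
      obtain ⟨h1, h2, h3, h4⟩ := hdist k l hkl
      cases ω k <;> cases ω l <;> simp [hv, h1, h2, h3, h4]
    rw [this]
    exact measure_empty
  · intro k
    set k' := finRotate n k with hk'
    have hkk' : k ≠ k' := by
      rw [hk']
      obtain ⟨m, rfl⟩ : ∃ m, n = m + 1 := ⟨n - 1, by omega⟩
      rw [finRotate_succ_apply]
      intro h
      have h10 : (1 : Fin (m+1)) = 0 := add_eq_left.mp h.symm
      rw [Fin.one_eq_zero_iff] at h10
      omega
    set T : Bool × Bool → Set (Fin n → Bool) := fun p =>
      if v k p.1 < v k' p.2 then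
        ((fun ω : Fin n → Bool => ω k) ⁻¹' {p.1}) ∩ ((fun ω : Fin n → Bool => ω k') ⁻¹' {p.2})
      else ∅ with hT
    have hS : {ω : Fin n → Bool | v k (ω k) < v k' (ω k')} = ⋃ p : Bool × Bool, T p := by
      ext ω
      simp only [mem_setOf_eq, mem_iUnion, hT]
      constructor
      · intro h
        exact ⟨(ω k, ω k'), by rw [if_pos h]; exact ⟨rfl, rfl⟩⟩
      · rintro ⟨p, hp⟩
        by_cases hc : v k p.1 < v k' p.2
        · rw [if_pos hc] at hp
          obtain ⟨hp1, hp2⟩ := hp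
          simp only [mem_preimage, mem_singleton_iff] at hp1 hp2
          rwa [hp1, hp2]
        · rw [if_neg hc] at hp
          exact absurd hp (notMem_empty ω)
    have hTmeas : ∀ p : Bool × Bool, MeasurableSet (T p) := by
      intro p
      simp only [hT]
      split
      · exact ((measurable_pi_apply k) (measurableSet_singleton _)).inter
          ((measurable_pi_apply k') (measurableSet_singleton _))
      · exact MeasurableSet.empty
    have hTdisj : Pairwise (Function.onFun Disjoint T) := by
      intro p p' hpp'
      refine Set.disjoint_left.mpr ?_
      intro ω hω hω'
      simp only [hT] at hω hω'
      split at hω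
      · split at hω'
        · obtain ⟨h1, h2⟩ := hω
          obtain ⟨h1', h2'⟩ := hω'
          simp only [mem_preimage, mem_singleton_iff] at h1 h2 h1' h2'
          exact hpp' (Prod.ext (h1 ▸ h1') (h2 ▸ h2'))
        · exact absurd hω' (notMem_empty ω)
      · exact absurd hω (notMem_empty ω)
    set f : Bool → Bool → ℝ := fun s t =>
      (if s then q k else 1 - q k) * (if t then q k' else 1 - q k')
        * (if v k s < v k' t then (1:ℝ) else 0) with hf
    have hTval : ∀ s t : Bool, Measure.pi μ (T (s, t)) = ENNReal.ofReal (f s t) := by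
      intro s t
      simp only [hT, hf]
      by_cases hc : v k s < v k' t
      · rw [if_pos hc]
        have hindep : IndepFun (fun ω : Fin n → Bool => ω k) (fun ω : Fin n → Bool => ω k')
            (Measure.pi μ) := (iIndep_eval μ).indepFun hkk'
        rw [hindep.measure_inter_preimage_eq_mul _ _ (measurableSet_singleton _)
            (measurableSet_singleton _)]
        rw [eval_preimage, eval_preimage]
        have e1 : μ k {s} = ENNReal.ofReal (if s then q k else 1 - q k) := by
          cases s
          · exact ber_false (q k)
          · exact ber_true (q k)
        have e2 : μ k' {t} = ENNReal.ofReal (if t then q k' else 1 - q k') := by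
          cases t
          · exact ber_false (q k')
          · exact ber_true (q k')
        rw [e1, e2, if_pos hc, mul_one,
          ← ENNReal.ofReal_mul (by split <;> [exact hq0 k; linarith [hq1 k]])]
      · rw [if_neg hc, if_neg hc, mul_zero, ENNReal.ofReal_zero]
        exact measure_empty
    have hfnn : ∀ s t : Bool, 0 ≤ f s t := by
      intro s t
      rw [hf]
      have h1 : 0 ≤ (if s then q k else 1 - q k) := by
        split
        · exact hq0 k
        · linarith [hq1 k]
      have h2 : 0 ≤ (if t then q k' else 1 - q k') := by
        split
        · exact hq0 k'
        · linarith [hq1 k']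
      have h3 : (0:ℝ) ≤ (if v k s < v k' t then (1:ℝ) else 0) := by
        split <;> norm_num
      exact mul_nonneg (mul_nonneg h1 h2) h3
    have hreal : f true true + f true false + (f false true + f false false) = x k := by
      have key := hx k
      rw [← hk'] at key
      simp only [hf, hv, Bool.false_eq_true, if_false, if_true]
      linarith [key]
    show Measure.pi μ {ω : Fin n → Bool | v k (ω k) < v k' (ω k')} = ENNReal.ofReal (x k)
    rw [hS, measure_iUnion hTdisj hTmeas, tsum_fintype, Fintype.sum_prod_type]
    simp only [Fintype.sum_bool]
    rw [hTval true true, hTval true false, hTval false true, hTval false false]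
    rw [← ENNReal.ofReal_add (hfnn true true) (hfnn true false),
      ← ENNReal.ofReal_add (hfnn false true) (hfnn false false),
      ← ENNReal.ofReal_add (add_nonneg (hfnn true true) (hfnn true false))
        (add_nonneg (hfnn false true) (hfnn false false)),
      hreal]

/-- low values (scaled by 2), for `n ≥ 4` -/
def AfZ (n t : ℕ) : ℤ :=
  if t = 0 then -(2*n) else if t = 1 then -(2*n) - 2 else if t = 2 then 1
    else if t = 3 then 0 else -(2*t)

/-- high values -/
def BfZ (n t : ℕ) : ℤ :=
  if t = 0 then 2*n else if t = 1 then 2*n + 2 else if t = 2 then 2*n + 4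
    else if t = 3 then 2*n + 6 else 2*t

lemma AfZ_lt_BfZ (n t s : ℕ) (hn : 4 ≤ n) (ht : t < n) (hs : s < n) :
    AfZ n t < BfZ n s := by
  unfold AfZ BfZ; split_ifs <;> omega

lemma AfZ_inj (n t s : ℕ) (ht : t < n) (hs : s < n) (hts : t ≠ s) :
    AfZ n t ≠ AfZ n s := by
  unfold AfZ; split_ifs <;> omega

lemma BfZ_inj (n t s : ℕ) (ht : t < n) (hs : s < n) (hts : t ≠ s) :
    BfZ n t ≠ BfZ n s := by
  unfold BfZ; split_ifs <;> omega

lemma AfZ_zero (n : ℕ) : AfZ n 0 = -(2*n) := rfl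
lemma AfZ_one (n : ℕ) : AfZ n 1 = -(2*n) - 2 := rfl
lemma AfZ_two (n : ℕ) : AfZ n 2 = 1 := rfl
lemma AfZ_three (n : ℕ) : AfZ n 3 = 0 := rfl
lemma AfZ_big (n t : ℕ) (h : 4 ≤ t) : AfZ n t = -(2*t) := by
  unfold AfZ; split_ifs <;> omega

lemma BfZ_zero (n : ℕ) : BfZ n 0 = 2*n := rfl
lemma BfZ_one (n : ℕ) : BfZ n 1 = 2*n + 2 := rfl
lemma BfZ_two (n : ℕ) : BfZ n 2 = 2*n + 4 := rfl
lemma BfZ_three (n : ℕ) : BfZ n 3 = 2*n + 6 := rfl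
lemma BfZ_big (n t : ℕ) (h : 4 ≤ t) : BfZ n t = 2*t := by
  unfold BfZ; split_ifs <;> omega

lemma AfZ_four (m : ℕ) (hm : 3 ≤ m) : AfZ (m+1) (4 % (m+1)) = -8 := by
  rcases Nat.lt_or_ge m 4 with h | h
  · have hm3 : m = 3 := by omega
    subst hm3; norm_num [AfZ]
  · have h4 : 4 % (m+1) = 4 := Nat.mod_eq_of_lt (by omega)
    rw [h4]; norm_num [AfZ]

lemma BfZ_four (m : ℕ) (hm : 3 ≤ m) : BfZ (m+1) (4 % (m+1)) = 8 := by
  rcases Nat.lt_or_ge m 4 with h | h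
  · have hm3 : m = 3 := by omega
    subst hm3; norm_num [BfZ]
  · have h4 : 4 % (m+1) = 4 := Nat.mod_eq_of_lt (by omega)
    rw [h4]; norm_num [BfZ]

/-- values for `n = 3` -/
def A3 (t : ℕ) : ℝ := if t = 0 then 1 else if t = 1 then 0 else 2
def B3 (t : ℕ) : ℝ := if t = 0 then 5 else if t = 1 then 3 else 4

end UpDownAux

end

end UpDownAux

theorem up_down_construction (n : ℕ) (hn : 3 ≤ n) (x : Fin n → ℝ)
    (hx : ∀ i, x i ∈ Set.Icc (0:ℝ) 1) (i : Fin n)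
    (h1 : 1 ≤ x i + x (finRotate n i))
    (h2 : x (finRotate n (finRotate n i)) +
        x (finRotate n (finRotate n (finRotate n i))) ≤ 1) :
    CyclicTuple n x := by
  classical
  open Fin.CommRing in
  open UpDownAux in
  obtain ⟨m, rfl⟩ : ∃ m, n = m + 1 := ⟨n - 1, by omega⟩
  simp only [finRotate_succ_apply] at h1 h2
  have h2' : x (i + 2) + x (i + 3) ≤ 1 := by
    have e2 : i + 1 + 1 = i + 2 := by ring
    have e3 : i + 2 + 1 = i + 3 := by ring
    rwa [e2, e3] at h2
  rcases Nat.lt_or_ge m 3 with hm | hm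
  · -- n = 3 case
    have hm2 : m = 2 := by omega
    subst hm2
    have h2'' : x (i + 2) + x i ≤ 1 := by
      rwa [show (3 : Fin 3) = 0 from rfl, show i + (0 : Fin 3) = i from by ring] at h2'
    set q1 : ℝ := x i / (1 - x (i + 2)) with hq1d
    have hd0 : (0:ℝ) ≤ 1 - x (i + 2) := by linarith [(hx (i + 2)).2]
    have hq1_0 : 0 ≤ q1 := div_nonneg (hx i).1 hd0
    have hq1_1 : q1 ≤ 1 := by
      rcases eq_or_lt_of_le hd0 with h | h
      · rw [hq1d, ← h, div_zero]; norm_num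
      · rw [hq1d, div_le_one h]; linarith
    have hq1_ge : 1 - x (i + 1) ≤ q1 ∨ q1 = 0 := by
      by_cases hz : q1 = 0
      · exact Or.inr hz
      · left
        rcases eq_or_lt_of_le hd0 with h | h
        · exact absurd (by rw [hq1d, ← h, div_zero]) hz
        · have hxi_le : x i ≤ q1 := by
            rw [hq1d, le_div_iff₀ h]
            nlinarith [(hx i).1, (hx (i + 2)).1]
          linarith
    set Q3 : Fin 3 → ℝ := fun t =>
      if t.val = 0 then x (i + 2) else if t.val = 1 then q1
      else 1 - (1 - x (i + 1)) / q1 with hQ3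
    apply cyclic_core 3 (by omega) x
      (fun k => A3 (k - i).val) (fun k => B3 (k - i).val) (fun k => Q3 (k - i))
    · intro k
      simp only [hQ3]
      split_ifs with hc1 hc2
      · exact (hx _).1
      · exact hq1_0
      · rcases hq1_ge with hge | hz
        · by_cases hz : q1 = 0
          · rw [hz, div_zero]; norm_num
          · have : (1 - x (i + 1)) / q1 ≤ 1 := by
              rw [div_le_one (lt_of_le_of_ne hq1_0 (Ne.symm hz))]
              exact hge
            linarith
        · rw [hz, div_zero]; norm_num
    · intro k
      simp only [hQ3]
      split_ifs with hc1 hc2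
      · exact (hx _).2
      · exact hq1_1
      · have : 0 ≤ (1 - x (i + 1)) / q1 :=
          div_nonneg (by linarith [(hx (i + 1)).2]) hq1_0
        linarith
    · intro k l hkl
      have hsub : (k - i) ≠ (l - i) := by
        intro hh
        apply hkl
        have := congrArg (· + i) hh
        simpa [sub_add_cancel] using this
      have hvne : (k - i).val ≠ (l - i).val := fun hh => hsub (Fin.ext hh)
      have hk3 := (k - i).isLt
      have hl3 := (l - i).isLt
      rcases (show (k - i).val = 0 ∨ (k - i).val = 1 ∨ (k - i).val = 2 by omega)
          with hk0 | hk0 | hk0 <;>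
        rcases (show (l - i).val = 0 ∨ (l - i).val = 1 ∨ (l - i).val = 2 by omega)
          with hl0 | hl0 | hl0 <;>
        simp only [hk0, hl0] <;>
        first
          | (exfalso; omega)
          | norm_num [A3, B3]
    · intro k
      rw [finRotate_succ_apply]
      obtain ⟨t, rfl⟩ : ∃ t, k = i + t := ⟨k - i, by ring⟩
      rw [show i + t + 1 - i = t + 1 from by ring, show i + t - i = t from by ring]
      have hisLt := t.isLt
      rcases (show t.val = 0 ∨ t.val = 1 ∨ t.val = 2 by omega) with hv0 | hv0 | hv0
      · -- edge 0 : pattern 4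
        have htv : t = 0 := Fin.ext (by rw [hv0]; rfl)
        have hlast : t ≠ Fin.last 2 := by
          intro hh; rw [hh, Fin.val_last] at hv0; omega
        have ht1 : (t + 1).val = 1 := by rw [Fin.val_add_one, if_neg hlast, hv0]
        have hqk : Q3 t = x (i + 2) := by simp [hQ3, hv0, -Fin.val_eq_zero_iff]
        have hq' : Q3 (t + 1) = q1 := by simp [hQ3, ht1, -Fin.val_eq_zero_iff]
        rw [show i + t = i from by rw [htv]; ring]
        simp only [hv0, ht1]
        rw [if_neg (by norm_num [A3]), if_pos (by norm_num [A3, B3]),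
          if_neg (by norm_num [A3, B3]), if_neg (by norm_num [B3]), hqk, hq']
        rcases eq_or_lt_of_le hd0 with h | h
        · have hxi0 : x i = 0 := le_antisymm (by linarith) (hx i).1
          rw [hq1d, ← h, div_zero, hxi0]
          linarith
        · have hne : 1 - x (i + 2) ≠ 0 := ne_of_gt h
          have hcancel : (1 - x (i + 2)) * (x i / (1 - x (i + 2))) = x i :=
            mul_div_cancel₀ _ hne
          rw [hq1d]
          linear_combination hcancel
      · -- edge 1 : pattern 3
        have htv : t = 1 := Fin.ext (by rw [hv0]; rfl)
        have hlast : t ≠ Fin.last 2 := by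
          intro hh; rw [hh, Fin.val_last] at hv0; omega
        have ht1 : (t + 1).val = 2 := by rw [Fin.val_add_one, if_neg hlast, hv0]
        have hqk : Q3 t = q1 := by simp [hQ3, hv0, -Fin.val_eq_zero_iff]
        have hq2 : Q3 (t + 1) = 1 - (1 - x (i + 1)) / q1 := by simp [hQ3, ht1, -Fin.val_eq_zero_iff]
        rw [show i + t = i + 1 from by rw [htv]]
        simp only [hv0, ht1]
        rw [if_pos (by norm_num [A3]), if_pos (by norm_num [A3, B3]),
          if_neg (by norm_num [A3, B3]), if_pos (by norm_num [B3]), hqk, hq2]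
        by_cases hz : q1 = 0
        · have hxi0 : x i = 0 := by
            rcases eq_or_lt_of_le hd0 with h | h
            · exact le_antisymm (by linarith) (hx i).1
            · rcases (div_eq_zero_iff).mp (hq1d ▸ hz) with h0 | h0
              · exact h0
              · exact absurd h0 (ne_of_gt h)
          have hx1 : x (i + 1) = 1 :=
            le_antisymm (hx (i + 1)).2 (by rw [hxi0] at h1; linarith)
          rw [hz, div_zero, hx1]
          linarith
        · have hcancel : q1 * ((1 - x (i + 1)) / q1) = 1 - x (i + 1) :=
            mul_div_cancel₀ _ hz
          linear_combination (-1 : ℝ) * hcancel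
      · -- edge 2 : pattern 6
        have htv : t = 2 := Fin.ext (by rw [hv0]; rfl)
        have hlast : t = Fin.last 2 := Fin.ext (by rw [hv0]; rfl)
        have ht1 : (t + 1).val = 0 := by rw [Fin.val_add_one, if_pos hlast]
        have hq' : Q3 (t + 1) = x (i + 2) := by simp [hQ3, ht1, -Fin.val_eq_zero_iff]
        rw [show i + t = i + 2 from by rw [htv]]
        simp only [hv0, ht1]
        rw [if_neg (by norm_num [A3]), if_pos (by norm_num [A3, B3]),
          if_neg (by norm_num [A3, B3]), if_pos (by norm_num [B3]), hq']
        ring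
  · -- n ≥ 4 case
    have h4m : 4 % (m+1) = 0 ∧ m = 3 ∨ 4 % (m+1) = 4 ∧ 4 ≤ m := by
      rcases Nat.lt_or_ge m 4 with h | h
      · left
        refine ⟨?_, by omega⟩
        have : m = 3 := by omega
        subst this; rfl
      · exact Or.inr ⟨Nat.mod_eq_of_lt (by omega), h⟩
    set Q : Fin (m+1) → ℝ := fun t =>
      if t.val = 2 then 1 - (1 - x (i + 1)) / (x i)
      else if t.val = 4 % (m+1) then x (i + 3) / (1 - x (i + 2))
      else x (i + (t - 1)) with hQ
    apply cyclic_core (m+1) (by omega) x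
      (fun k => ((AfZ (m+1) (k - i).val : ℤ) : ℝ))
      (fun k => ((BfZ (m+1) (k - i).val : ℤ) : ℝ))
      (fun k => Q (k - i))
    · -- 0 ≤ q
      intro k
      simp only [hQ]
      split_ifs with hc1 hc2
      · rcases eq_or_lt_of_le (hx i).1 with h0 | h0
        · rw [← h0]
          simp
        · have : (1 - x (i+1)) / (x i) ≤ 1 := by
            rw [div_le_one h0]
            linarith
          linarith
      · exact div_nonneg (hx _).1 (by linarith [(hx (i+2)).2])
      · exact (hx _).1
    · -- q ≤ 1
      intro k
      simp only [hQ]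
      split_ifs with hc1 hc2
      · have : 0 ≤ (1 - x (i+1)) / (x i) :=
          div_nonneg (by linarith [(hx (i+1)).2]) (hx i).1
        linarith
      · rcases eq_or_lt_of_le (hx (i+2)).2 with h0 | h0
        · rw [h0]
          norm_num
        · rw [div_le_one (by linarith)]
          linarith
      · exact (hx _).2
    · -- distinctness
      intro k l hkl
      have hsub : (k - i) ≠ (l - i) := by
        intro hh
        apply hkl
        have := congrArg (· + i) hh
        simpa [sub_add_cancel] using this
      have hvne : (k - i).val ≠ (l - i).val := fun hh => hsub (Fin.ext hh)
      have H1 := AfZ_inj (m+1) _ _ (k - i).isLt (l - i).isLt hvne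
      have H2 := BfZ_inj (m+1) _ _ (k - i).isLt (l - i).isLt hvne
      have H3 := AfZ_lt_BfZ (m+1) (k-i).val (l-i).val (by omega) (k - i).isLt (l - i).isLt
      have H4 := AfZ_lt_BfZ (m+1) (l-i).val (k-i).val (by omega) (l - i).isLt (k - i).isLt
      refine ⟨by exact_mod_cast H1, ne_of_lt (by exact_mod_cast H3),
        ne_of_gt (by exact_mod_cast H4), by exact_mod_cast H2⟩
    · -- the main edge computation
      intro k
      rw [finRotate_succ_apply]
      obtain ⟨t, rfl⟩ : ∃ t, k = i + t := ⟨k - i, by ring⟩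
      rw [show i + t + 1 - i = t + 1 from by ring, show i + t - i = t from by ring]
      have hisLt := t.isLt
      have hmr : (3:ℝ) ≤ (m:ℝ) := by exact_mod_cast hm
      have hm0 : (0:ℝ) ≤ (m:ℝ) := by positivity
      by_cases hv0 : t.val = 0
      · -- edge 0 : pattern 6
        have hlast : t ≠ Fin.last m := by
          intro hh; rw [hh, Fin.val_last] at hv0; omega
        have ht1 : (t + 1).val = 1 := by
          rw [Fin.val_add_one, if_neg hlast, hv0]
        have hq' : Q (t + 1) = x (i + t) := by
          simp only [hQ, ht1]
          rw [if_neg (by omega), if_neg (by omega), show t + 1 - 1 = t from by ring]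
        simp only [hv0, ht1, AfZ_zero, AfZ_one, BfZ_zero, BfZ_one]
        rw [if_neg (by push_cast; linarith), if_pos (by push_cast; linarith),
          if_neg (by push_cast; linarith), if_pos (by push_cast; linarith), hq']
        ring
      · by_cases hv1 : t.val = 1
        · -- edge 1 : pattern 3
          have htv : t = 1 := Fin.ext (by rw [hv1]; symm; show 1 % (m+1) = 1; exact Nat.mod_eq_of_lt (by omega))
          have hlast : t ≠ Fin.last m := by
            intro hh; rw [hh, Fin.val_last] at hv1; omega
          have ht1 : (t + 1).val = 2 := by
            rw [Fin.val_add_one, if_neg hlast, hv1]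
          have hqk : Q t = x i := by
            simp only [hQ, hv1]
            rw [if_neg (by omega), if_neg (by omega),
              show i + (t - 1) = i from by rw [htv]; ring]
          have hq2 : Q (t + 1) = 1 - (1 - x (i + 1)) / (x i) := by
            simp only [hQ, ht1]
            rw [if_pos trivial]
          rw [show i + t = i + 1 from by rw [htv]]
          simp only [hv1, ht1, AfZ_one, AfZ_two, BfZ_one, BfZ_two]
          rw [if_pos (by push_cast; linarith), if_pos (by push_cast; linarith),
            if_neg (by push_cast; linarith), if_pos (by push_cast; linarith), hqk, hq2]
          by_cases hxi : x i = 0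
          · rw [hxi, div_zero]
            have hb := (hx (i + 1)).2
            have hb1 : (1:ℝ) ≤ x (i + 1) := by rw [hxi] at h1; linarith
            linarith
          · have hcancel : x i * ((1 - x (i + 1)) / x i) = 1 - x (i + 1) :=
              mul_div_cancel₀ _ hxi
            linear_combination (-1 : ℝ) * hcancel
        · by_cases hv2 : t.val = 2
          · -- edge 2 : pattern 6
            have htv : t = 2 := Fin.ext (by rw [hv2]; symm; show 2 % (m+1) = 2; exact Nat.mod_eq_of_lt (by omega))
            have hlast : t ≠ Fin.last m := by
              intro hh; rw [hh, Fin.val_last] at hv2; omega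
            have ht1 : (t + 1).val = 3 := by
              rw [Fin.val_add_one, if_neg hlast, hv2]
            have hq' : Q (t + 1) = x (i + t) := by
              simp only [hQ, ht1]
              rw [if_neg (by omega), if_neg (by omega), show t + 1 - 1 = t from by ring]
            simp only [hv2, ht1, AfZ_two, AfZ_three, BfZ_two, BfZ_three]
            rw [if_neg (by push_cast; linarith), if_pos (by push_cast; linarith),
              if_neg (by push_cast; linarith), if_pos (by push_cast; linarith), hq']
            ring
          · by_cases hv3 : t.val = 3
            · -- edge 3 : pattern 4
              have htv : t = 3 := Fin.ext (by rw [hv3]; symm; show 3 % (m+1) = 3; exact Nat.mod_eq_of_lt (by omega))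
              have ht1 : (t + 1).val = 4 % (m + 1) := by
                by_cases hl : t = Fin.last m
                · rw [Fin.val_add_one, if_pos hl]
                  have : m = 3 := by rw [hl, Fin.val_last] at hv3; omega
                  omega
                · rw [Fin.val_add_one, if_neg hl, hv3]
                  have : m ≠ 3 := by
                    intro hh
                    exact hl (Fin.ext (by rw [hv3, Fin.val_last, hh]))
                  omega
              have hqk : Q t = x (i + 2) := by
                simp only [hQ, hv3]
                rw [if_neg (by omega), if_neg (by omega),
                  show i + (t - 1) = i + 2 from by rw [htv]; ring]
              have hq4 : Q (t + 1) = x (i + 3) / (1 - x (i + 2)) := by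
                simp only [hQ, ht1]
                rw [if_neg (by omega), if_pos trivial]
              rw [show i + t = i + 3 from by rw [htv]]
              simp only [hv3, ht1, AfZ_three, BfZ_three, AfZ_four m hm, BfZ_four m hm]
              rw [if_neg (by push_cast; linarith), if_pos (by push_cast; linarith),
                if_neg (by push_cast; linarith), if_neg (by push_cast; linarith), hqk, hq4]
              by_cases h12 : x (i + 2) = 1
              · have ha := (hx (i + 3)).1
                rw [h12] at h2'
                rw [h12]
                linarith
              · have hne : 1 - x (i + 2) ≠ 0 := sub_ne_zero.mpr (Ne.symm h12)
                have hcancel : (1 - x (i + 2)) * (x (i + 3) / (1 - x (i + 2))) = x (i + 3) :=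
                  mul_div_cancel₀ _ hne
                linear_combination hcancel
            · by_cases hvm : t.val = m
              · -- edge n-1 : pattern 6 (here m ≥ 4)
                have hlast : t = Fin.last m := Fin.ext (by rw [hvm, Fin.val_last])
                have ht1 : (t + 1).val = 0 := by rw [Fin.val_add_one, if_pos hlast]
                have hq' : Q (t + 1) = x (i + t) := by
                  simp only [hQ, ht1]
                  rw [if_neg (by omega), if_neg (by omega), show t + 1 - 1 = t from by ring]
                have htr : (t.val : ℝ) = (m : ℝ) := by exact_mod_cast hvm
                simp only [ht1, AfZ_zero, BfZ_zero,
                  AfZ_big (m+1) t.val (by omega), BfZ_big (m+1) t.val (by omega)]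
                rw [if_neg (by push_cast; linarith), if_pos (by push_cast; linarith),
                  if_neg (by push_cast; linarith), if_pos (by push_cast; linarith), hq']
                ring
              · -- chain edges : pattern 6
                have h4le : 4 ≤ t.val := by omega
                have hlast : t ≠ Fin.last m := by
                  intro hh; rw [hh, Fin.val_last] at hvm; omega
                have ht1 : (t + 1).val = t.val + 1 := by rw [Fin.val_add_one, if_neg hlast]
                have hq' : Q (t + 1) = x (i + t) := by
                  simp only [hQ, ht1]
                  rw [if_neg (by omega), if_neg (by omega), show t + 1 - 1 = t from by ring]
                have htr : (0:ℝ) ≤ (t.val : ℝ) := by positivity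
                simp only [ht1, AfZ_big (m+1) t.val (by omega), BfZ_big (m+1) t.val (by omega),
                  AfZ_big (m+1) (t.val + 1) (by omega), BfZ_big (m+1) (t.val + 1) (by omega)]
                rw [if_neg (by push_cast; linarith), if_pos (by push_cast; linarith),
                  if_neg (by push_cast; linarith), if_pos (by push_cast; linarith), hq']
                ring
end

section
/- Let n ≥ 3 and let (x_1,...,x_n) ∈ [0,1]^n, with indices interpreted modulo n. If it is NOT the case that x_i + x_{i+1} < 1 for all i, and NOT the case that x_i + x_{i+1} > 1 for all i, then there exists an index i with x_i + x_{i+1} ≥ 1 and x_{i+2} + x_{i+3} ≤ 1. -/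
lemma sum_range_two_mul_split (g : ℕ → ℝ) (m : ℕ) :
    ∑ t ∈ Finset.range (2*m), g t = ∑ k ∈ Finset.range m, (g (2*k) + g (2*k+1)) := by
  induction m with
  | zero => simp
  | succ m ih =>
    rw [show 2*(m+1) = (2*m+1)+1 by ring, Finset.sum_range_succ, Finset.sum_range_succ, ih,
      Finset.sum_range_succ]
    ring

open Fin.NatCast Fin.CommRing

theorem exists_up_down_index (n : ℕ) (hn : 3 ≤ n) (x : Fin n → ℝ)
    (hx : ∀ i, x i ∈ Set.Icc (0:ℝ) 1)
    (hI : ¬ ∀ i : Fin n, x i + x (finRotate n i) < 1)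
    (hII : ¬ ∀ i : Fin n, 1 < x i + x (finRotate n i)) :
    ∃ i : Fin n, 1 ≤ x i + x (finRotate n i) ∧
      x (finRotate n (finRotate n i)) +
        x (finRotate n (finRotate n (finRotate n i))) ≤ 1 := by
  obtain ⟨N, rfl⟩ : ∃ N, n = N + 1 := ⟨n - 1, by omega⟩
  simp only [finRotate_succ_apply] at hI hII ⊢
  by_contra hcon
  push_neg at hcon hI hII
  obtain ⟨i0, hi0⟩ := hI
  obtain ⟨j0, hj0⟩ := hII
  set s : Fin (N+1) → ℝ := fun i => x i + x (i+1) with hs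
  have key : ∀ i : Fin (N+1), 1 ≤ s i → 1 < s (i + 2) := by
    intro i hi
    have h := hcon i hi
    have e1 : i + 1 + 1 = i + 2 := by ring
    rw [e1] at h
    exact h
  have A : ∀ (k : ℕ) (i : Fin (N+1)), 1 ≤ s i → 1 < s (i + ((2*(k+1) : ℕ) : Fin (N+1))) := by
    intro k
    induction k with
    | zero =>
      intro i hi
      have : ((2*(0+1) : ℕ) : Fin (N+1)) = 2 := by norm_num
      rw [this]
      exact key i hi
    | succ k ih =>
      intro i hi
      have h1 := ih i hi
      have h2 := key _ h1.le
      have e : (i + ((2*(k+1) : ℕ) : Fin (N+1))) + 2 = i + ((2*(k+1+1) : ℕ) : Fin (N+1)) := by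
        push_cast
        ring
      rwa [e] at h2
  have B : ∀ (k : ℕ) (i : Fin (N+1)), s (i + ((2*(k+1) : ℕ) : Fin (N+1))) ≤ 1 → s i < 1 := by
    intro k i h
    by_contra hc
    push_neg at hc
    exact absurd h (not_le.mpr (A k i hc))
  rcases Nat.even_or_odd (N+1) with he | ho
  · -- even case
    obtain ⟨m, hm⟩ := he
    have hm2 : 2 ≤ m := by omega
    have hcast2m : ((2*m : ℕ) : Fin (N+1)) = 0 := by
      rw [show 2*m = N+1 by omega]
      exact Fin.natCast_self _
    have hAcl : ∀ r : ℕ, 1 < s (i0 + ((2*r : ℕ) : Fin (N+1))) := by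
      intro r
      have h := A (r + m - 1) i0 hi0
      rw [show (2*((r+m-1)+1) : ℕ) = 2*r + 2*m by omega, Nat.cast_add, ← add_assoc,
        hcast2m, add_zero] at h
      exact h
    have hBcl : ∀ r : ℕ, r < m → s (j0 + ((2*r : ℕ) : Fin (N+1))) < 1 := by
      intro r hr
      apply B (m - r - 1)
      rw [show (2*((m-r-1)+1) : ℕ) = 2*(m-r) by omega]
      have e : (j0 + ((2*r : ℕ):Fin (N+1))) + ((2*(m-r):ℕ):Fin (N+1)) = j0 := by
        have e2 : ((2*r : ℕ):Fin (N+1)) + ((2*(m-r):ℕ):Fin (N+1)) = ((2*m :ℕ):Fin (N+1)) := by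
          rw [← Nat.cast_add]
          congr 1
          omega
        rw [add_assoc, e2, hcast2m, add_zero]
      rw [e]
      exact hj0
    have hsum : ∀ j : Fin (N+1),
        ∑ k ∈ Finset.range m, s (j + ((2*k : ℕ):Fin (N+1))) = ∑ t, x t := by
      intro j
      have h1 : ∑ t : Fin (N+1), x t = ∑ t : Fin (N+1), x (j + t) :=
        (Equiv.sum_comp (Equiv.addLeft j) x).symm
      have h2 : ∑ t : Fin (N+1), x (j + t)
          = ∑ t ∈ Finset.range (N+1), x (j + ((t : ℕ) : Fin (N+1))) := by
        rw [← Fin.sum_univ_eq_sum_range (fun t => x (j + ((t : ℕ) : Fin (N+1))))]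
        simp [Fin.cast_val_eq_self]
      have hr : Finset.range (N+1) = Finset.range (2*m) := by
        congr 1
        omega
      rw [h1, h2, hr,
        sum_range_two_mul_split (fun t => x (j + ((t : ℕ) : Fin (N+1)))) m]
      apply Finset.sum_congr rfl
      intro k _
      simp only [hs]
      congr 1
      push_cast
      ring
    have hne : (Finset.range m).Nonempty := Finset.nonempty_range_iff.mpr (by omega)
    have h1 : (m:ℝ) < ∑ k ∈ Finset.range m, s (i0 + ((2*k:ℕ):Fin (N+1))) := by
      have := Finset.sum_lt_sum_of_nonempty hne
        (f := fun _ => (1:ℝ)) (g := fun k => s (i0 + ((2*k:ℕ):Fin (N+1))))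
        (fun k _ => hAcl k)
      simpa using this
    have h2 : ∑ k ∈ Finset.range m, s (j0 + ((2*k:ℕ):Fin (N+1))) < (m:ℝ) := by
      have := Finset.sum_lt_sum_of_nonempty hne
        (f := fun k => s (j0 + ((2*k:ℕ):Fin (N+1)))) (g := fun _ => (1:ℝ))
        (fun k hk => hBcl k (Finset.mem_range.mp hk))
      simpa using this
    rw [hsum] at h1 h2
    linarith
  · -- odd case
    set a : ℕ := (j0 - i0).val with ha
    have halt : a < N + 1 := (j0 - i0).isLt
    obtain ⟨K, c, hK1, hKc⟩ : ∃ K c, 1 ≤ K ∧ 2*K = a + (N+1)*c := by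
      rcases Nat.even_or_odd a with h | h
      · rcases Nat.eq_zero_or_pos a with h0 | h0
        · exact ⟨N+1, 2, by omega, by omega⟩
        · obtain ⟨b, hb⟩ := h
          exact ⟨b, 0, by omega, by omega⟩
      · obtain ⟨b, hb⟩ := h
        obtain ⟨d, hd⟩ := ho
        exact ⟨b + d + 1, 1, by omega, by omega⟩
    have hcast : ((2*K : ℕ) : Fin (N+1)) = j0 - i0 := by
      rw [hKc, Nat.cast_add, Nat.cast_mul, Fin.natCast_self, zero_mul, add_zero, ha,
        Fin.cast_val_eq_self]
    have h := A (K-1) i0 hi0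
    rw [show 2*((K-1)+1) = 2*K by omega, hcast, show i0 + (j0 - i0) = j0 by ring] at h
    have hj0' : s j0 ≤ 1 := hj0
    linarith
end
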